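/- arXiv:2509.09039 — 8 statements merged into one kernel-verified Lean document; each statement's English description precedes it below -/
import Mathlib

section
/- Let u ≥ 2, 1 ≤ s ≤ u−1 with gcd(u,s) = 1, let m ≥ 1 and n = mu + s. Consider functions f : ZMod n → Bool having exactly u values equal to true and such that, reading cyclically, the multiset of gaps (a gap is the number of consecutive false values strictly between two cyclically consecutive true positions) consists of exactly s gaps equal to m and u−s gaps equal to m−1. Then the number of orbits of the translation (rotation) action of ZMod n on this set of functions equals (1/u)·(u choose s). -/
/-!
Rotation acts freely on these colourings: the additive order of a period of `f` divides both the
number `u` of beads (points where `f` is `true`) and the number `s` of gaps of length `m`, which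
are coprime. So if we pin a bead at `0`, each rotation orbit contributes exactly `u` colourings.
A colouring with a bead at `0` is determined by its gap word, the set of `i < u` for which the
`i`-th gap after `0` has length `m`, and every `s`-subset of `range u` occurs as a gap word.
-/

/-- The rotation (translation) setoid on two-colourings of `ZMod N`. -/
def rotSetoid (N : ℕ) : Setoid (ZMod N → Bool) where
  r f g := ∃ t : ZMod N, ∀ x, g x = f (x + t)
  iseqv := by
    refine ⟨fun f => ⟨0, fun x => by rw [add_zero]⟩, ?_, ?_⟩
    · rintro f g ⟨t, h⟩
      exact ⟨-t, fun x => by rw [h (x + -t), neg_add_cancel_right]⟩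
    · rintro f g k ⟨t₁, h₁⟩ ⟨t₂, h₂⟩
      exact ⟨t₂ + t₁, fun x => by rw [h₂ x, h₁ (x + t₂), add_assoc]⟩

/-- `gapEq N g f x` says that `x` is a `true` position of `f : ZMod N → Bool` and the gap
following it is exactly `g`: the `g` positions `x+1, …, x+g` are `false` and `x+g+1` is `true`. -/
def gapEq (N g : ℕ) (f : ZMod N → Bool) (x : ZMod N) : Prop :=
  f x = true ∧ (∀ j : ℕ, 1 ≤ j → j ≤ g → f (x + (j : ZMod N)) = false) ∧
    f (x + ((g + 1 : ℕ) : ZMod N)) = true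

open Finset Function

theorem Nat.card_eq_card_mul_of_forall_card_fiber {α β : Type*} [Finite α] [Finite β]
    (g : α → β) {k : ℕ} (h : ∀ b, Nat.card {a // g a = b} = k) :
    Nat.card α = Nat.card β * k := by
  have := Fintype.ofFinite β
  rw [← Nat.card_congr (Equiv.sigmaFiberEquiv g), Nat.card_sigma]
  simp [h]

theorem Nat.card_exists_mem_eq_of_injOn {α β : Type*} {P : α → β} {I : Finset α}
    (hP : Set.InjOn P I) : Nat.card {y // ∃ i ∈ I, P i = y} = #I := by
  rw [← Set.ncard_coe_finset, ← hP.ncard_image, ← Nat.card_coe_set_eq]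
  rfl

/-- A set invariant under `· + t` is a union of cosets of `zmultiples t`. -/
theorem addOrderOf_dvd_card_of_add_right_iff {G : Type*} [AddGroup G] {t : G} {p : G → Prop}
    (hp : ∀ z, p (z + t) ↔ p z) : addOrderOf t ∣ Nat.card {z // p z} := by
  have hzsmul : ∀ (n : ℤ) z, p (z + n • t) ↔ p z := by
    intro n
    induction n using Int.induction_on with
    | zero => simp
    | succ n ih => intro z; rw [add_zsmul, one_zsmul, ← add_assoc, hp, ih]
    | pred n ih =>
      intro z
      rw [sub_zsmul, one_zsmul, ← add_assoc, ← hp, neg_add_cancel_right, ih]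
  have hset : {z | p z} = QuotientAddGroup.mk ⁻¹' (QuotientAddGroup.mk '' {z | p z} :
      Set (G ⧸ AddSubgroup.zmultiples t)) := by
    ext z
    simp only [Set.mem_ofPred_eq, Set.mem_preimage, Set.mem_image, QuotientAddGroup.eq,
      AddSubgroup.mem_zmultiples_iff]
    refine ⟨fun hz => ⟨z, hz, 0, by simp⟩, ?_⟩
    rintro ⟨y, hy, n, hn⟩
    rwa [← add_neg_cancel_left y z, ← hn, hzsmul]
  rw [← Nat.card_zmultiples, show Nat.card {z // p z} = Nat.card {z | p z} from rfl, hset,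
    Nat.card_congr (QuotientAddGroup.preimageMkEquivAddSubgroupProdSet _ _), Nat.card_prod]
  exact dvd_mul_right _ _

section GapEq

variable {N g g' : ℕ} {f : ZMod N → Bool} {x : ZMod N}

theorem gapEq.unique (h : gapEq N g f x) (h' : gapEq N g' f x) : g = g' := by
  by_contra hne
  wlog hlt : g < g' generalizing g g'
  · exact this h' h (Ne.symm hne) (by omega)
  have := h'.2.1 (g + 1) (by omega) hlt
  rw [h.2.2] at this
  exact Bool.noConfusion this

theorem gapEq_comp_add_right_iff (t : ZMod N) :
    gapEq N g (fun y => f (y + t)) x ↔ gapEq N g f (x + t) := by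
  simp only [gapEq, add_right_comm]

end GapEq

def HasGapProfile (u s m : ℕ) (f : ZMod (m * u + s) → Bool) : Prop :=
  Nat.card {x // f x = true} = u ∧ Nat.card {x // gapEq (m * u + s) m f x} = s ∧
    Nat.card {x // gapEq (m * u + s) (m - 1) f x} = u - s

theorem HasGapProfile.comp_add_right {u s m : ℕ} {f : ZMod (m * u + s) → Bool}
    (hf : HasGapProfile u s m f) (t : ZMod (m * u + s)) :
    HasGapProfile u s m (fun y => f (y + t)) := by
  have hcard : ∀ p : ZMod (m * u + s) → Prop, Nat.card {x // p (x + t)} = Nat.card {x // p x} :=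
    fun p => Nat.card_congr ((Equiv.addRight t).subtypeEquiv fun _ => Iff.rfl)
  simp only [HasGapProfile, gapEq_comp_add_right_iff]
  exact ⟨(hcard (f · = true)).trans hf.1, (hcard _).trans hf.2.1, (hcard _).trans hf.2.2⟩

theorem HasGapProfile.eq_zero_of_add_right_eq {u s m : ℕ} {f : ZMod (m * u + s) → Bool}
    (hf : HasGapProfile u s m f) (hcop : u.Coprime s) {t : ZMod (m * u + s)}
    (ht : ∀ z, f (z + t) = f z) : t = 0 := by
  have hgap : ∀ z, gapEq (m * u + s) m f (z + t) ↔ gapEq (m * u + s) m f z := fun z => by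
    rw [← gapEq_comp_add_right_iff, funext ht]
  have hu := addOrderOf_dvd_card_of_add_right_iff (p := (f · = true)) (t := t) (by simp [ht])
  have hs := addOrderOf_dvd_card_of_add_right_iff hgap
  rw [hf.1] at hu
  rw [hf.2.1] at hs
  exact AddMonoid.addOrderOf_eq_one_iff.mp (Nat.eq_one_of_dvd_coprimes hcop hu hs)

theorem card_pointed_eq_card_orbits_mul {u s m : ℕ} [NeZero (m * u + s)] (hcop : u.Coprime s) :
    Nat.card {g : {f : ZMod (m * u + s) → Bool // HasGapProfile u s m f} // g.1 0 = true} =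
      Nat.card (Quotient (Setoid.comap
        (Subtype.val : {f : ZMod (m * u + s) → Bool // HasGapProfile u s m f} → _)
        (rotSetoid (m * u + s)))) * u := by
  refine Nat.card_eq_card_mul_of_forall_card_fiber (fun g => Quotient.mk _ g.1) fun q => ?_
  induction q using Quotient.inductionOn with | h f => ?_
  refine (Nat.card_eq_of_bijective
    (fun t => ⟨⟨⟨fun z => f.1 (z + t.1), f.2.comp_add_right t.1⟩, by simpa using t.2⟩,
      Quotient.sound ⟨-t.1, fun x => by simp⟩⟩)
    ⟨fun t t' htt' => ?_, fun g => ?_⟩).symm.trans f.2.1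
  · have hrot := congrArg (fun g => g.1.1.1) htt'
    refine Subtype.ext (sub_eq_zero.mp (f.2.eq_zero_of_add_right_eq hcop fun z => ?_))
    simpa [sub_add_eq_add_sub, add_sub_assoc] using congrFun hrot (z - t')
  · obtain ⟨τ, hτ⟩ := Quotient.exact g.2
    refine ⟨⟨-τ, by simpa [hτ] using g.1.2⟩, Subtype.ext (Subtype.ext (Subtype.ext ?_))⟩
    funext z
    simp [hτ]

def wordPos (m : ℕ) (S : Finset ℕ) (i : ℕ) : ℕ :=
  ∑ j ∈ range i, (m + if j ∈ S then 1 else 0)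

/-- The colouring with beads at `wordPos m S i`, `i < u`: the gap after bead `i` has length `m`
if `i ∈ S` and `m - 1` otherwise. -/
def wordColouring (u s m : ℕ) (S : Finset ℕ) : ZMod (m * u + s) → Bool :=
  fun y => decide (∃ i ∈ range u, (wordPos m S i : ZMod (m * u + s)) = y)

open Classical in
/-- For `f` with the gap profile, the distance from the bead `x` to the next bead. -/
noncomputable def gapStep (N m : ℕ) (f : ZMod N → Bool) (x : ZMod N) : ℕ :=
  m + if gapEq N m f x then 1 else 0

noncomputable def nextBead (N m : ℕ) (f : ZMod N → Bool) (x : ZMod N) : ZMod N :=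
  x + gapStep N m f x

open Classical in
noncomputable def gapWord (u s m : ℕ) (f : ZMod (m * u + s) → Bool) : Finset ℕ :=
  (range u).filter fun i => gapEq (m * u + s) m f ((nextBead (m * u + s) m f)^[i] 0)

section Word

variable {u s m : ℕ} {S : Finset ℕ}

theorem wordPos_zero : wordPos m S 0 = 0 := rfl

theorem wordPos_succ (i : ℕ) :
    wordPos m S (i + 1) = wordPos m S i + (m + if i ∈ S then 1 else 0) :=
  sum_range_succ _ _

theorem wordPos_strictMono (hm : 1 ≤ m) : StrictMono (wordPos m S) :=
  strictMono_nat_of_lt_succ fun i => by rw [wordPos_succ]; omega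

theorem wordPos_of_subset (hS : S ⊆ range u) : wordPos m S u = m * u + #S := by
  rw [wordPos, sum_add_distrib, sum_const, card_range, smul_eq_mul, sum_boole, Nat.cast_id,
    filter_mem_eq_inter, inter_eq_right.2 hS, mul_comm]

theorem wordColouring_eq_true_iff {y : ZMod (m * u + s)} :
    wordColouring u s m S y = true ↔ ∃ i ∈ range u, (wordPos m S i : ZMod (m * u + s)) = y :=
  decide_eq_true_iff

variable (hm : 1 ≤ m) (hS : S ⊆ range u) (hcard : #S = s)
include hm hS hcard

theorem wordPos_lt {i : ℕ} (hi : i < u) : wordPos m S i < m * u + s :=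
  hcard ▸ wordPos_of_subset hS ▸ wordPos_strictMono hm hi

theorem injOn_wordPos_cast :
    Set.InjOn (fun i => (wordPos m S i : ZMod (m * u + s))) (range u) := by
  intro i hi j hj hij
  have hval := congrArg ZMod.val hij
  simp only [ZMod.val_natCast_of_lt (wordPos_lt hm hS hcard (mem_range.1 hi)),
    ZMod.val_natCast_of_lt (wordPos_lt hm hS hcard (mem_range.1 hj))] at hval
  exact (wordPos_strictMono hm).injective hval

theorem gapEq_wordColouring {i : ℕ} (hi : i < u) :
    gapEq (m * u + s) (if i ∈ S then m else m - 1) (wordColouring u s m S) (wordPos m S i) := by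
  have hnext : wordPos m S (i + 1) = wordPos m S i + ((if i ∈ S then m else m - 1) + 1) := by
    rw [wordPos_succ]; split_ifs <;> omega
  have hle : wordPos m S (i + 1) ≤ m * u + s :=
    hcard ▸ wordPos_of_subset hS ▸ (wordPos_strictMono hm).monotone hi
  refine ⟨wordColouring_eq_true_iff.2 ⟨i, mem_range.2 hi, rfl⟩, fun j hj hjd => ?_, ?_⟩
  · rw [← Bool.not_eq_true, wordColouring_eq_true_iff, ← Nat.cast_add]
    rintro ⟨l, hl, hlj⟩
    have hval := congrArg ZMod.val hlj
    rw [ZMod.val_natCast_of_lt (wordPos_lt hm hS hcard (mem_range.1 hl)),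
      ZMod.val_natCast_of_lt (by omega)] at hval
    have hil := (wordPos_strictMono hm).lt_iff_lt.1
      (show wordPos m S i < wordPos m S l by omega)
    have hli := (wordPos_strictMono hm).lt_iff_lt.1
      (show wordPos m S l < wordPos m S (i + 1) by omega)
    omega
  · rw [wordColouring_eq_true_iff, ← Nat.cast_add, ← hnext]
    rcases Nat.lt_or_ge (i + 1) u with hiu | hiu
    · exact ⟨i + 1, mem_range.2 hiu, rfl⟩
    · refine ⟨0, mem_range.2 (by omega), ?_⟩
      rw [show i + 1 = u by omega, wordPos_of_subset hS, hcard, ZMod.natCast_self, wordPos_zero,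
        Nat.cast_zero]

theorem gapEq_wordColouring_iff {g : ℕ} {y : ZMod (m * u + s)} :
    gapEq (m * u + s) g (wordColouring u s m S) y ↔ ∃ i ∈ range u,
      g = (if i ∈ S then m else m - 1) ∧ (wordPos m S i : ZMod (m * u + s)) = y := by
  constructor
  · intro h
    obtain ⟨i, hi, rfl⟩ := wordColouring_eq_true_iff.1 h.1
    exact ⟨i, hi, h.unique (gapEq_wordColouring hm hS hcard (mem_range.1 hi)), rfl⟩
  · rintro ⟨i, hi, rfl, rfl⟩
    exact gapEq_wordColouring hm hS hcard (mem_range.1 hi)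

theorem gapEq_wordColouring_wordPos_iff {i : ℕ} (hi : i < u) :
    gapEq (m * u + s) m (wordColouring u s m S) (wordPos m S i) ↔ i ∈ S := by
  refine ⟨fun h => ?_, fun hiS => ?_⟩
  · have := h.unique (gapEq_wordColouring hm hS hcard hi)
    by_contra hiS
    rw [if_neg hiS] at this
    omega
  · simpa [hiS] using gapEq_wordColouring hm hS hcard hi

theorem hasGapProfile_wordColouring : HasGapProfile u s m (wordColouring u s m S) := by
  have hinj := injOn_wordPos_cast hm hS hcard
  have hcount : ∀ {p : ZMod (m * u + s) → Prop} {I : Finset ℕ}, I ⊆ range u →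
      (∀ y, p y ↔ ∃ i ∈ I, (wordPos m S i : ZMod (m * u + s)) = y) →
        Nat.card {y // p y} = #I :=
    fun hI hp => (Nat.card_congr (Equiv.subtypeEquivRight hp)).trans
      (Nat.card_exists_mem_eq_of_injOn (hinj.mono (coe_subset.2 hI)))
  refine ⟨?_, ?_, ?_⟩
  · rw [hcount subset_rfl fun _ => wordColouring_eq_true_iff, card_range]
  · refine (hcount hS fun y => ?_).trans hcard
    rw [gapEq_wordColouring_iff hm hS hcard]
    constructor
    · rintro ⟨i, -, hmi, rfl⟩
      refine ⟨i, ?_, rfl⟩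
      by_contra hiS
      rw [if_neg hiS] at hmi
      omega
    · rintro ⟨i, hiS, rfl⟩
      exact ⟨i, hS hiS, by rw [if_pos hiS], rfl⟩
  · rw [hcount sdiff_subset fun y => ?_, card_sdiff_of_subset hS, card_range, hcard]
    rw [gapEq_wordColouring_iff hm hS hcard]
    constructor
    · rintro ⟨i, hi, hmi, rfl⟩
      refine ⟨i, mem_sdiff.2 ⟨hi, fun hiS => ?_⟩, rfl⟩
      rw [if_pos hiS] at hmi
      omega
    · rintro ⟨i, hi, rfl⟩
      exact ⟨i, (mem_sdiff.1 hi).1, by rw [if_neg (mem_sdiff.1 hi).2], rfl⟩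

theorem gapWord_wordColouring : gapWord u s m (wordColouring u s m S) = S := by
  classical
  have hpos : ∀ i ≤ u,
      (nextBead (m * u + s) m (wordColouring u s m S))^[i] 0 = wordPos m S i := by
    intro i hi
    induction i with
    | zero => simp [wordPos_zero]
    | succ i ih =>
      rw [iterate_succ_apply', ih (by omega), nextBead, gapStep, wordPos_succ,
        if_congr (gapEq_wordColouring_wordPos_iff hm hS hcard (i := i) (by omega)) rfl rfl]
      push_cast
      ring
  ext i
  simp only [gapWord, mem_filter, mem_range]
  constructor
  · rintro ⟨hi, h⟩
    rwa [hpos i hi.le, gapEq_wordColouring_wordPos_iff hm hS hcard hi] at h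
  · intro hiS
    have hi := mem_range.1 (hS hiS)
    rw [hpos i hi.le, gapEq_wordColouring_wordPos_iff hm hS hcard hi]
    exact ⟨hi, hiS⟩

end Word

theorem le_gapStep (N m : ℕ) (f : ZMod N → Bool) (x : ZMod N) : m ≤ gapStep N m f x :=
  Nat.le_add_right _ _

theorem iterate_nextBead (N m : ℕ) (f : ZMod N → Bool) (x : ZMod N) (i : ℕ) :
    (nextBead N m f)^[i] x =
      x + ↑(∑ j ∈ range i, gapStep N m f ((nextBead N m f)^[j] x)) := by
  induction i with
  | zero => simp
  | succ i ih =>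
    rw [iterate_succ_apply', nextBead, sum_range_succ, Nat.cast_add, ← add_assoc, ← ih]

theorem gapWord_subset_range {u s m : ℕ} (f : ZMod (m * u + s) → Bool) :
    gapWord u s m f ⊆ range u := by
  classical
  exact filter_subset _ _

theorem sum_gapStep_iterate_zero {u s m : ℕ} (f : ZMod (m * u + s) → Bool) {i : ℕ}
    (hi : i ≤ u) :
    ∑ j ∈ range i, gapStep (m * u + s) m f ((nextBead (m * u + s) m f)^[j] 0) =
      wordPos m (gapWord u s m f) i := by
  classical
  refine sum_congr rfl fun j hj => congrArg (m + ·) (if_congr ?_ rfl rfl)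
  simp [gapWord, (mem_range.1 hj).trans_le hi]

theorem iterate_nextBead_zero {u s m : ℕ} (f : ZMod (m * u + s) → Bool) {i : ℕ}
    (hi : i ≤ u) :
    (nextBead (m * u + s) m f)^[i] 0 = (wordPos m (gapWord u s m f) i : ZMod (m * u + s)) := by
  rw [iterate_nextBead, zero_add, sum_gapStep_iterate_zero f hi]

namespace HasGapProfile

variable {u s m : ℕ} [NeZero (m * u + s)] {f : ZMod (m * u + s) → Bool}
  (hf : HasGapProfile u s m f)
include hf

theorem sum_gapStep :
    ∑ x ∈ univ.filter (f · = true), gapStep (m * u + s) m f x = m * u + s := by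
  classical
  have hT : #(univ.filter (f · = true)) = u :=
    (Nat.subtype_card _ fun _ => by simp).symm.trans hf.1
  have hA : #(univ.filter (gapEq (m * u + s) m f)) = s :=
    (Nat.subtype_card _ fun _ => by simp).symm.trans hf.2.1
  simp only [gapStep, sum_add_distrib, sum_const, smul_eq_mul, sum_boole, filter_filter, hT]
  rw [filter_congr fun x _ => and_iff_right_of_imp fun h : gapEq _ m f x => h.1]
  simp [hA, mul_comm]

variable (hm : 1 ≤ m)
include hm

theorem gapEq_or {x : ZMod (m * u + s)} (hx : f x = true) :
    gapEq (m * u + s) m f x ∨ gapEq (m * u + s) (m - 1) f x := by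
  classical
  set T := univ.filter (f · = true)
  set A := univ.filter (gapEq (m * u + s) m f)
  set B := univ.filter (gapEq (m * u + s) (m - 1) f)
  have hT : #T = u := (Nat.subtype_card _ fun _ => by simp [T]).symm.trans hf.1
  have hA : #A = s := (Nat.subtype_card _ fun _ => by simp [A]).symm.trans hf.2.1
  have hB : #B = u - s := (Nat.subtype_card _ fun _ => by simp [B]).symm.trans hf.2.2
  have hAT : A ⊆ T := fun y hy => by simpa [A, T] using (mem_filter.1 hy).2.1
  have hBT : B ⊆ T := fun y hy => by simpa [B, T] using (mem_filter.1 hy).2.1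
  have hAB : Disjoint A B := disjoint_filter.2 fun _ _ ha hb => by have := ha.unique hb; omega
  have hAT_card : #A ≤ #T := card_le_card hAT
  have hABT : A ∪ B = T :=
    eq_of_subset_of_card_le (union_subset hAT hBT) (by rw [card_union_of_disjoint hAB]; omega)
  have hxAB : x ∈ A ∪ B := by rw [hABT]; simpa [T] using hx
  simpa [A, B] using hxAB

theorem gapEq_gapStep {x : ZMod (m * u + s)} (hx : f x = true) :
    gapEq (m * u + s) (gapStep (m * u + s) m f x - 1) f x := by
  unfold gapStep
  split_ifs with h
  · simpa using h
  · simpa using (hf.gapEq_or hm hx).resolve_left h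

theorem nextBead_eq_true {x : ZMod (m * u + s)} (hx : f x = true) :
    f (nextBead (m * u + s) m f x) = true := by
  have h := (hf.gapEq_gapStep hm hx).2.2
  rwa [Nat.sub_add_cancel (hm.trans (le_gapStep _ _ _ _))] at h

theorem mapsTo_nextBead :
    Set.MapsTo (nextBead (m * u + s) m f) {x | f x = true} {x | f x = true} :=
  fun _ => hf.nextBead_eq_true hm

/-- If the steps from `x` and `y` differed, the bead with the shorter step would lie inside the
other one's gap. -/
theorem injOn_nextBead : Set.InjOn (nextBead (m * u + s) m f) {x | f x = true} := by
  intro x hx y hy hxy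
  wlog hle : gapStep (m * u + s) m f y ≤ gapStep (m * u + s) m f x generalizing x y
  · exact (this hy hx hxy.symm (by omega)).symm
  unfold nextBead at hxy
  rcases hle.lt_or_eq with hlt | heq
  · have hyx : y = x + ↑(gapStep (m * u + s) m f x - gapStep (m * u + s) m f y) := by
      rw [Nat.cast_sub hlt.le]
      linear_combination -hxy
    have hy_step := le_gapStep (m * u + s) m f y
    have hfy := (hf.gapEq_gapStep hm hx).2.1
      (gapStep (m * u + s) m f x - gapStep (m * u + s) m f y) (by omega) (by omega)
    rw [← hyx, show f y = true from hy] at hfy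
    exact Bool.noConfusion hfy
  · rw [heq] at hxy
    exact add_right_cancel hxy

theorem mem_periodicPts_nextBead {x : ZMod (m * u + s)} (hx : f x = true) :
    x ∈ periodicPts (nextBead (m * u + s) m f) := by
  have hmaps := hf.mapsTo_nextBead hm
  obtain ⟨n, hn, hper⟩ :=
    (hmaps.restrict_inj.2 (hf.injOn_nextBead hm)).mem_periodicPts ⟨x, hx⟩
  exact ⟨n, hn,
    (hmaps.coe_iterate_restrict ⟨x, hx⟩ n).symm.trans (congrArg Subtype.val hper)⟩

theorem image_iterate_nextBead_subset {x₀ : ZMod (m * u + s)} (hx₀ : f x₀ = true) (k : ℕ) :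
    (range k).image ((nextBead (m * u + s) m f)^[·] x₀) ⊆ univ.filter (f · = true) :=
  image_subset_iff.2 fun i _ => by simpa using (hf.mapsTo_nextBead hm).iterate i hx₀

/-- The steps along the cycle through `x₀` add up to a positive multiple of `m * u + s`, yet to
at most the sum `m * u + s` of the steps from all beads. -/
theorem sum_gapStep_iterate_minimalPeriod {x₀ : ZMod (m * u + s)} (hx₀ : f x₀ = true) :
    ∑ i ∈ range (minimalPeriod (nextBead (m * u + s) m f) x₀),
      gapStep (m * u + s) m f ((nextBead (m * u + s) m f)^[i] x₀) = m * u + s := by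
  set σ := nextBead (m * u + s) m f
  have hk : 0 < minimalPeriod σ x₀ :=
    minimalPeriod_pos_of_mem_periodicPts (hf.mem_periodicPts_nextBead hm hx₀)
  have hinj : Set.InjOn (σ^[·] x₀) (range (minimalPeriod σ x₀)) := by
    simpa using iterate_injOn_Iio_minimalPeriod (f := σ) (x := x₀)
  have hret := iterate_nextBead (m * u + s) m f x₀ (minimalPeriod σ x₀)
  rw [iterate_minimalPeriod] at hret
  refine le_antisymm ?_ (Nat.le_of_dvd ?_ ((ZMod.natCast_eq_zero_iff _ _).1
    (add_eq_left.1 hret.symm)))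
  · rw [← sum_image hinj]
    exact (sum_le_sum_of_subset (hf.image_iterate_nextBead_subset hm hx₀ _)).trans
      hf.sum_gapStep.le
  · exact sum_pos (fun i _ => Nat.lt_of_lt_of_le hm (le_gapStep _ _ _ _))
      (nonempty_range_iff.2 hk.ne')

/-- Since every step is positive, the cycle through `x₀` passes through every bead. -/
theorem iterate_nextBead_cycle {x₀ : ZMod (m * u + s)} (hx₀ : f x₀ = true) :
    (range u).image ((nextBead (m * u + s) m f)^[·] x₀) = univ.filter (f · = true) ∧
      ∑ i ∈ range u, gapStep (m * u + s) m f ((nextBead (m * u + s) m f)^[i] x₀) =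
        m * u + s := by
  set σ := nextBead (m * u + s) m f
  have hsum := hf.sum_gapStep_iterate_minimalPeriod hm hx₀
  have hinj : Set.InjOn (σ^[·] x₀) (range (minimalPeriod σ x₀)) := by
    simpa using iterate_injOn_Iio_minimalPeriod (f := σ) (x := x₀)
  have hsub := hf.image_iterate_nextBead_subset hm hx₀ (minimalPeriod σ x₀)
  have hcycle :
      (range (minimalPeriod σ x₀)).image (σ^[·] x₀) = univ.filter (f · = true) := by
    by_contra hne
    obtain ⟨y, hyT, hyC⟩ := exists_of_ssubset (hsub.ssubset_of_ne hne)
    have := sum_lt_sum_of_subset hsub hyT hyC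
      (Nat.lt_of_lt_of_le hm (le_gapStep (m * u + s) m f y)) fun _ _ _ => Nat.zero_le _
    rw [sum_image hinj, hsum, hf.sum_gapStep] at this
    exact lt_irrefl _ this
  have hku : minimalPeriod σ x₀ = u := by
    rw [← card_range (minimalPeriod σ x₀), ← card_image_of_injOn hinj, hcycle]
    exact (Nat.subtype_card _ fun _ => by simp).symm.trans hf.1
  rw [hku] at hcycle hsum
  exact ⟨hcycle, hsum⟩

variable (h0 : f 0 = true)
include h0

theorem card_gapWord : #(gapWord u s m f) = s := by
  have hsum := (hf.iterate_nextBead_cycle hm h0).2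
  rw [sum_gapStep_iterate_zero f le_rfl, wordPos_of_subset (gapWord_subset_range f)] at hsum
  omega

theorem wordColouring_gapWord : wordColouring u s m (gapWord u s m f) = f := by
  funext y
  rw [Bool.eq_iff_iff, wordColouring_eq_true_iff]
  have hy : y ∈ univ.filter (f · = true) ↔ f y = true := by simp
  rw [← hy, ← (hf.iterate_nextBead_cycle hm h0).1, mem_image]
  refine exists_congr fun i => and_congr_right fun hi => ?_
  rw [iterate_nextBead_zero f (mem_range.1 hi).le]

end HasGapProfile

noncomputable def pointedEquiv {u s m : ℕ} [NeZero (m * u + s)] (hm : 1 ≤ m) (hs : 1 ≤ s) :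
    {g : {f : ZMod (m * u + s) → Bool // HasGapProfile u s m f} // g.1 0 = true} ≃
      {S // S ∈ powersetCard s (range u)} where
  toFun g := ⟨gapWord u s m g.1.1,
    mem_powersetCard.2 ⟨gapWord_subset_range _, g.1.2.card_gapWord hm g.2⟩⟩
  invFun S :=
    have hS := mem_powersetCard.1 S.2
    have hu : 0 < u := by
      have := card_le_card hS.1
      rw [card_range, hS.2] at this
      omega
    ⟨⟨wordColouring u s m S, hasGapProfile_wordColouring hm hS.1 hS.2⟩,
      wordColouring_eq_true_iff.2 ⟨0, mem_range.2 hu, by simp [wordPos_zero]⟩⟩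
  left_inv g := Subtype.ext (Subtype.ext (g.1.2.wordColouring_gapWord hm g.2))
  right_inv S := Subtype.ext (gapWord_wordColouring hm (mem_powersetCard.1 S.2).1
    (mem_powersetCard.1 S.2).2)

theorem card_pointed_eq_choose {u s m : ℕ} [NeZero (m * u + s)] (hm : 1 ≤ m) (hs : 1 ≤ s) :
    Nat.card {g : {f : ZMod (m * u + s) → Bool // HasGapProfile u s m f} // g.1 0 = true} =
      u.choose s := by
  rw [Nat.card_congr (pointedEquiv hm hs), Nat.card_eq_fintype_card, Fintype.card_coe,
    card_powersetCard, card_range]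

theorem necklace_count_pyramid_general (u s m : ℕ) (hs1 : 1 ≤ s)
    (hcop : Nat.Coprime u s) (hm : 1 ≤ m) :
    u * Nat.card (Quotient (Setoid.comap
      (Subtype.val :
        {f : ZMod (m * u + s) → Bool //
            Nat.card {x : ZMod (m * u + s) // f x = true} = u ∧
            Nat.card {x : ZMod (m * u + s) // gapEq (m * u + s) m f x} = s ∧
            Nat.card {x : ZMod (m * u + s) // gapEq (m * u + s) (m - 1) f x} = u - s}
          → (ZMod (m * u + s) → Bool))
      (rotSetoid (m * u + s)))) = Nat.choose u s := by
  have : NeZero (m * u + s) := ⟨by omega⟩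
  rw [mul_comm]
  exact (card_pointed_eq_card_orbits_mul hcop).symm.trans (card_pointed_eq_choose hm hs1)

/-- let `u ≥ 2`, `1 ≤ s ≤ u-1` coprime to `u`, `m ≥ 1` and `n = mu + s`.
The number of orbits of the rotation action of `ZMod n` on the set of functions
`f : ZMod n → Bool` with exactly `u` values `true`, exactly `s` cyclic gaps equal to `m`
and exactly `u - s` cyclic gaps equal to `m - 1`, equals `(1/u) * (u.choose s)`. -/
theorem necklace_count_pyramid (u s m : ℕ) (hu : 2 ≤ u) (hs1 : 1 ≤ s) (hs2 : s ≤ u - 1)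
    (hcop : Nat.Coprime u s) (hm : 1 ≤ m) :
    u * Nat.card (Quotient (Setoid.comap
      (Subtype.val :
        {f : ZMod (m * u + s) → Bool //
            Nat.card {x : ZMod (m * u + s) // f x = true} = u ∧
            Nat.card {x : ZMod (m * u + s) // gapEq (m * u + s) m f x} = s ∧
            Nat.card {x : ZMod (m * u + s) // gapEq (m * u + s) (m - 1) f x} = u - s}
          → (ZMod (m * u + s) → Bool))
      (rotSetoid (m * u + s)))) = Nat.choose u s :=
  necklace_count_pyramid_general u s m hs1 hcop hm
end

section
/- Fix integers u ≥ 2, 1 ≤ s ≤ u−1, m ≥ 1, and let P = {(c,k) ∈ ℕ × ℕ : c < u and k < h_c}, where h_c = m+1 if c < s and h_c = m otherwise. For p ∈ P write col(p) and row(p) for its two coordinates. Let W₀ = {σ ∈ Perm(P) : col(σ(p)) = col(p) for all p} (column-preserving permutations) and W^f = {σ ∈ Perm(P) : row(σ(p)) = row(p) for all p} (row-preserving permutations). Then a permutation σ ∈ Perm(P) satisfies 'for all p ≠ q with col(p) = col(q), row(σ(p)) ≠ row(σ(q))' if and only if σ = σ_f ∘ σ₀ for some σ_f ∈ W^f and σ₀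 ∈ W₀. -/
/-!
`σ` factors as `σf * σ₀` exactly when `p ↦ (col p, row (σ p))` is an injective self-map of the
boxes, which is then `σ₀`. Injectivity is the hypothesis, so it only remains to see that this map
stays inside the pyramid. A tall column has as many boxes as there are rows, so by pigeonhole it
sends one box to the top row `m`; the tall columns thereby already supply as many boxes sent to
row `m` as that row holds, so no box of a short column is sent there.
-/

/-- The set of boxes of the left-adjusted pyramid of the partition `[u^m, s]`:
pairs `(c, k)` with `c < u` (the column) and `k < h_c` (the row), where the column height
is `h_c = m + 1` for `c < s` and `h_c = m` otherwise. -/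
abbrev PyrBox (u s m : ℕ) := {p : ℕ × ℕ // p.1 < u ∧ p.2 < if p.1 < s then m + 1 else m}

open Function

namespace Equiv.Perm

variable {γ ρ : Type*} {P : γ × ρ → Prop}

/-- This is `σ₀ p` for any factorisation `σ = σf * σ₀` with `σf` row- and `σ₀` column-preserving. -/
def columnPart (σ : Equiv.Perm {p : γ × ρ // P p}) (p : {p : γ × ρ // P p}) : γ × ρ :=
  ((p : γ × ρ).1, (σ p : γ × ρ).2)

theorem injective_columnPart_iff (σ : Equiv.Perm {p : γ × ρ // P p}) :
    Injective (columnPart σ) ↔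
      ∀ p q : {p : γ × ρ // P p}, p ≠ q → (p : γ × ρ).1 = (q : γ × ρ).1 →
        (σ p : γ × ρ).2 ≠ (σ q : γ × ρ).2 := by
  refine ⟨fun h p q hpq hcol hrow => hpq (h (Prod.ext hcol hrow)), fun h p q hpq => ?_⟩
  by_contra hne
  obtain ⟨hcol, hrow⟩ := Prod.ext_iff.mp hpq
  exact h p q hne hcol hrow

theorem exists_factorisation_iff [Finite {p : γ × ρ // P p}]
    (σ : Equiv.Perm {p : γ × ρ // P p}) :
    (∃ σf σ0 : Equiv.Perm {p : γ × ρ // P p},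
        (∀ p, (σf p : γ × ρ).2 = (p : γ × ρ).2) ∧
        (∀ p, (σ0 p : γ × ρ).1 = (p : γ × ρ).1) ∧
        σ = σf * σ0) ↔
      Injective (columnPart σ) ∧ ∀ p, P (columnPart σ p) := by
  constructor
  · rintro ⟨σf, σ0, hf, h0, rfl⟩
    have hσ0 : columnPart (σf * σ0) = Subtype.val ∘ σ0 := by
      funext p
      exact Prod.ext (h0 p).symm (hf (σ0 p))
    rw [hσ0]
    exact ⟨Subtype.val_injective.comp σ0.injective, fun p => (σ0 p).2⟩
  · rintro ⟨hinj, hmem⟩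
    let f : {p : γ × ρ // P p} → {p : γ × ρ // P p} := fun p => ⟨columnPart σ p, hmem p⟩
    have hf : Injective f := fun p q h => hinj (congrArg Subtype.val h)
    let σ0 := Equiv.ofBijective f (Finite.injective_iff_bijective.mp hf)
    refine ⟨σ * σ0⁻¹, σ0, fun q => ?_, fun _ => rfl, (inv_mul_cancel_right σ σ0).symm⟩
    calc ((σ * σ0⁻¹) q : γ × ρ).2 = (σ0 (σ0.symm q) : γ × ρ).2 := rfl
      _ = (q : γ × ρ).2 := by rw [σ0.apply_symm_apply]

variable [Finite {p : γ × ρ // P p}] {σ : Equiv.Perm {p : γ × ρ // P p}}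

theorem exists_snd_apply_eq_of_full_column (hσ : Injective (columnPart σ)) {c : γ}
    (hc : ∀ p : {p : γ × ρ // P p}, P (c, (p : γ × ρ).2)) (p : {p : γ × ρ // P p}) :
    ∃ q : {p : γ × ρ // P p}, (q : γ × ρ).1 = c ∧ (σ q : γ × ρ).2 = (p : γ × ρ).2 := by
  set column : Set {p : γ × ρ // P p} := {q | (q : γ × ρ).1 = c}
  set rows : Set ρ := Set.range fun q : {p : γ × ρ // P p} => (q : γ × ρ).2
  have hrows : (fun q : {p : γ × ρ // P p} => (q : γ × ρ).2) '' column = rows := by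
    refine (Set.image_subset_range _ _).antisymm ?_
    rintro _ ⟨q, rfl⟩
    exact ⟨⟨(c, (q : γ × ρ).2), hc q⟩, rfl, rfl⟩
  have hσinj : Set.InjOn (fun q => (σ q : γ × ρ).2) column :=
    fun q hq q' hq' h => hσ (Prod.ext (hq.trans hq'.symm) h)
  have hinj : Set.InjOn (fun q : {p : γ × ρ // P p} => (q : γ × ρ).2) column :=
    fun q hq q' hq' h => Subtype.ext (Prod.ext (hq.trans hq'.symm) h)
  have hσrows : (fun q => (σ q : γ × ρ).2) '' column = rows := by
    refine Set.eq_of_subset_of_ncard_le ?_ ?_ (Set.finite_range _)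
    · rintro _ ⟨q, -, rfl⟩
      exact ⟨σ q, rfl⟩
    · rw [← hrows, hinj.ncard_image, hσinj.ncard_image]
  obtain ⟨q, hq, hrow⟩ : (p : γ × ρ).2 ∈ (fun q => (σ q : γ × ρ).2) '' column :=
    hσrows ▸ Set.mem_range_self p
  exact ⟨q, hq, hrow⟩

/-- By pigeonhole, each full column meeting the row of `σ p` sends one box to that row; these are
already as many boxes as the row holds, so `p` lies in one of those columns. -/
theorem columnPart_mem_of_full_columns (hσ : Injective (columnPart σ)) (p : {p : γ × ρ // P p})
    (hfull : ∀ q : {p : γ × ρ // P p}, (q : γ × ρ).2 = (σ p : γ × ρ).2 →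
      ∀ r : {p : γ × ρ // P p}, P ((q : γ × ρ).1, (r : γ × ρ).2)) :
    P (columnPart σ p) := by
  set k := (σ p : γ × ρ).2
  set row : Set {p : γ × ρ // P p} := {q | (q : γ × ρ).2 = k}
  set col := fun q : {p : γ × ρ // P p} => (q : γ × ρ).1
  have hcols : col '' row = col '' (σ ⁻¹' row) := by
    refine Set.eq_of_subset_of_ncard_le ?_ ?_ (Set.toFinite _)
    · rintro _ ⟨q, hq, rfl⟩
      obtain ⟨q', hq', hrow⟩ := exists_snd_apply_eq_of_full_column hσ (hfull q hq) q
      exact ⟨q', hrow.trans hq, hq'⟩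
    · have hinj : Set.InjOn col row := fun q hq q' hq' h =>
        Subtype.ext (Prod.ext h (hq.trans hq'.symm))
      rw [hinj.ncard_image, ← Set.ncard_preimage_of_injective_subset_range σ.injective
        (σ.surjective.range_eq ▸ Set.subset_univ _)]
      exact Set.ncard_image_le
  obtain ⟨q, hq, hcol⟩ : col p ∈ col '' row := hcols ▸ Set.mem_image_of_mem col rfl
  have hq_eq : columnPart σ p = q := Prod.ext hcol.symm hq.symm
  exact hq_eq ▸ q.2

end Equiv.Perm

namespace PyrBox

open Equiv.Perm

instance (u s m : ℕ) : Finite (PyrBox u s m) :=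
  Set.Finite.subset ((Set.finite_Iio u).prod (Set.finite_Iio (m + 1))) fun p hp =>
    ⟨hp.1, Set.mem_Iio.mpr (by have := hp.2; split_ifs at this <;> omega)⟩

variable {u s m : ℕ}

theorem snd_lt_succ (p : PyrBox u s m) : (p : ℕ × ℕ).2 < m + 1 := by
  have := p.2.2
  split_ifs at this <;> omega

theorem fst_lt_of_snd_eq (p : PyrBox u s m) (h : (p : ℕ × ℕ).2 = m) : (p : ℕ × ℕ).1 < s := by
  have := p.2.2
  split_ifs at this with hs
  · exact hs
  · omega

theorem columnPart_mem {σ : Equiv.Perm (PyrBox u s m)} (hσ : Injective (columnPart σ))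
    (p : PyrBox u s m) :
    (columnPart σ p).1 < u ∧ (columnPart σ p).2 < if (columnPart σ p).1 < s then m + 1 else m := by
  refine ⟨p.2.1, ?_⟩
  split_ifs with hs
  · exact snd_lt_succ (σ p)
  · refine lt_of_le_of_ne (Nat.le_of_lt_succ (snd_lt_succ (σ p))) fun htop => ?_
    have hmem := columnPart_mem_of_full_columns hσ p fun q hq r =>
      ⟨q.2.1, by rw [if_pos (fst_lt_of_snd_eq q (hq.trans htop))]; exact snd_lt_succ r⟩
    have := hmem.2
    rw [if_neg hs] at this
    omega

end PyrBox

theorem pyramid_perm_factorisation_general (u s m : ℕ) (σ : Equiv.Perm (PyrBox u s m)) :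
    (∀ p q : PyrBox u s m, p ≠ q → (p : ℕ × ℕ).1 = (q : ℕ × ℕ).1 →
        (σ p : ℕ × ℕ).2 ≠ (σ q : ℕ × ℕ).2) ↔
      ∃ σf σ0 : Equiv.Perm (PyrBox u s m),
        (∀ p, (σf p : ℕ × ℕ).2 = (p : ℕ × ℕ).2) ∧
        (∀ p, (σ0 p : ℕ × ℕ).1 = (p : ℕ × ℕ).1) ∧
        σ = σf * σ0 := by
  rw [← Equiv.Perm.injective_columnPart_iff, Equiv.Perm.exists_factorisation_iff]
  exact ⟨fun hσ => ⟨hσ, PyrBox.columnPart_mem hσ⟩, And.left⟩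

/-- Lemma 4.18: a permutation `σ` of the boxes of the pyramid sends no pair of
distinct boxes in a common column to a pair of boxes in a common row if and only if
`σ = σf ∘ σ₀` with `σf` row-preserving and `σ₀` column-preserving. -/
theorem pyramid_perm_factorisation (u s m : ℕ) (hu : 2 ≤ u) (hs1 : 1 ≤ s) (hs2 : s ≤ u - 1)
    (hm : 1 ≤ m) (σ : Equiv.Perm (PyrBox u s m)) :
    (∀ p q : PyrBox u s m, p ≠ q → (p : ℕ × ℕ).1 = (q : ℕ × ℕ).1 →
        (σ p : ℕ × ℕ).2 ≠ (σ q : ℕ × ℕ).2) ↔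
      ∃ σf σ0 : Equiv.Perm (PyrBox u s m),
        (∀ p, (σf p : ℕ × ℕ).2 = (p : ℕ × ℕ).2) ∧
        (∀ p, (σ0 p : ℕ × ℕ).1 = (p : ℕ × ℕ).1) ∧
        σ = σf * σ0 :=
  pyramid_perm_factorisation_general u s m σ
end

section
/- Fix integers u ≥ 2 and 1 ≤ s ≤ u−1. For m ∈ ℕ let h^{(m)}_c = m+1 if c < s and h^{(m)}_c = m otherwise (for 0 ≤ c ≤ u−1), let D(m,k) = Σ_{c=0}^{u−1−k} h^{(m)}_c · h^{(m)}_{c+k} for 1 ≤ k ≤ u−1, and let G(m) = Σ_{c=0}^{u−1} (h^{(m)}_c)² − 1. Then for every k with 1 ≤ k ≤ u−1, the quantity D(m,k) + D(m,u−k) − G(m) is independent of m; that is, D(m,k) + D(m,u−k) − G(m) = D(0,k) + D(0,u−k) − G(0) for all m ∈ ℕ. -/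
/-!
Write `h` for the column heights. Passing from `m` to `m + a` adds the constant `a` to every
height, which changes `D(k) = Σ_{c < u-k} h_c h_{c+k}` by
`a · Σ_{c < u-k} (h_c + h_{c+k}) + a² (u - k)`.
The windows `[0, u-k)`, `[k, u)` for `D(k)` and `[0, k)`, `[u-k, u)` for `D(u-k)` together cover
`[0, u)` exactly twice, so `D(k) + D(u-k)` changes by `2a Σ_c h_c + a² u`, which is precisely
the change of `G = Σ_c h_c² - 1`.
-/

open Finset

/-- Column heights of the left-adjusted pyramid of the partition `[u^m, s]`:
`h_c = m + 1` for `c < s` and `h_c = m` otherwise. -/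
def pyrH (s m c : ℕ) : ℕ := if c < s then m + 1 else m

/-- `pyrD u s m k = dim g_k = Σ_{c=0}^{u-1-k} h_c · h_{c+k}` for `1 ≤ k ≤ u-1`. -/
def pyrD (u s m k : ℕ) : ℕ := ∑ c ∈ Finset.range (u - k), pyrH s m c * pyrH s m (c + k)

/-- `pyrG u s m = dim g₀ = Σ_{c=0}^{u-1} h_c² - 1`. -/
def pyrG (u s m : ℕ) : ℤ := (∑ c ∈ Finset.range u, (pyrH s m c : ℤ) ^ 2) - 1

def autocorr (u : ℕ) (h : ℕ → ℤ) (k : ℕ) : ℤ := ∑ c ∈ range (u - k), h c * h (c + k)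

lemma autocorr_add_const (u : ℕ) (h : ℕ → ℤ) (a : ℤ) (k : ℕ) :
    autocorr u (fun c => h c + a) k
      = autocorr u h k + a * ∑ c ∈ range (u - k), (h c + h (c + k))
        + a ^ 2 * (u - k : ℕ) := by
  have hconst : a ^ 2 * ((u - k : ℕ) : ℤ) = ∑ _c ∈ range (u - k), a ^ 2 := by
    simp [mul_comm]
  simp only [autocorr, mul_sum, hconst, ← sum_add_distrib]
  exact sum_congr rfl fun _ _ => by ring

lemma sum_range_windows (h : ℕ → ℤ) {u k : ℕ} (hk : k ≤ u) :
    ∑ c ∈ range (u - k), (h c + h (c + k)) + ∑ c ∈ range k, (h c + h (c + (u - k)))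
      = 2 * ∑ c ∈ range u, h c := by
  have hleft : ∑ c ∈ range u, h c
      = ∑ c ∈ range k, h c + ∑ c ∈ range (u - k), h (c + k) := by
    rw [← Nat.add_sub_of_le hk, sum_range_add, Nat.add_sub_cancel_left]
    simp only [add_comm k]
  have hright : ∑ c ∈ range u, h c
      = ∑ c ∈ range (u - k), h c + ∑ c ∈ range k, h (c + (u - k)) := by
    rw [← Nat.sub_add_cancel hk, sum_range_add, Nat.add_sub_cancel]
    simp only [add_comm (u - k)]
  simp only [sum_add_distrib]
  linarith

lemma autocorr_combination_add_const (h : ℕ → ℤ) (a : ℤ) {u k : ℕ} (hk : k ≤ u) :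
    autocorr u (fun c => h c + a) k + autocorr u (fun c => h c + a) (u - k)
        - autocorr u (fun c => h c + a) 0
      = autocorr u h k + autocorr u h (u - k) - autocorr u h 0 := by
  have hwindows := sum_range_windows h hk
  simp only [autocorr_add_const, Nat.sub_sub_self hk, Nat.sub_zero, add_zero, ← two_mul]
    at hwindows ⊢
  rw [← mul_sum]
  push_cast [Nat.cast_sub hk]
  linear_combination a * hwindows

lemma pyrH_cast (s m c : ℕ) : (pyrH s m c : ℤ) = pyrH s 0 c + m := by
  unfold pyrH
  split <;> push_cast <;> ring

lemma pyrD_eq_autocorr (u s m k : ℕ) :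
    (pyrD u s m k : ℤ) = autocorr u (fun c => pyrH s m c) k := by
  simp [pyrD, autocorr]

lemma pyrG_eq_autocorr (u s m : ℕ) : pyrG u s m = autocorr u (fun c => pyrH s m c) 0 - 1 := by
  simp [pyrG, autocorr, sq]

theorem dim_combination_independent_of_m_general (u s : ℕ) (m k : ℕ) (hk2 : k ≤ u - 1) :
    (pyrD u s m k : ℤ) + (pyrD u s m (u - k) : ℤ) - pyrG u s m
      = (pyrD u s 0 k : ℤ) + (pyrD u s 0 (u - k) : ℤ) - pyrG u s 0 := by
  have hshift : (fun c => (pyrH s m c : ℤ)) = fun c => (pyrH s 0 c : ℤ) + m :=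
    funext (pyrH_cast s m)
  have hcomb :=
    autocorr_combination_add_const (fun c => (pyrH s 0 c : ℤ)) m (u := u) (k := k) (by omega)
  simp only [pyrD_eq_autocorr, pyrG_eq_autocorr, hshift]
  linarith

/-- `D(m,k) + D(m,u-k) - G(m)` is independent of `m`. -/
theorem dim_combination_independent_of_m (u s : ℕ) (hu : 2 ≤ u) (hs1 : 1 ≤ s)
    (hs2 : s ≤ u - 1) (m k : ℕ) (hk1 : 1 ≤ k) (hk2 : k ≤ u - 1) :
    (pyrD u s m k : ℤ) + (pyrD u s m (u - k) : ℤ) - pyrG u s m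
      = (pyrD u s 0 k : ℤ) + (pyrD u s 0 (u - k) : ℤ) - pyrG u s 0 :=
  dim_combination_independent_of_m_general u s m k hk2
end

section
/- Fix integers u ≥ 2 and 1 ≤ s ≤ u−1. For m ∈ ℕ let h^{(m)}_c = m+1 if c < s and h^{(m)}_c = m otherwise (for 0 ≤ c ≤ u−1), and let D(m,k) = Σ_{c=0}^{u−1−k} h^{(m)}_c · h^{(m)}_{c+k} for 1 ≤ k ≤ u−1. Then for all m ∈ ℕ and 1 ≤ k ≤ u−1, D(m+1,k) − D(m,k) = (u−k) + 2(m+1)·max{0, s−k} + 2m·max{0, (u−s)−k} + (2m+1)·min{s, u−s, k, u−k}. -/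
open Finset

theorem card_range_filter_add_lt (n k t : ℕ) : #{c ∈ range n | c + k < t} = min n (t - k) := by
  rw [← card_range (min n (t - k))]
  congr 1
  ext c
  simp only [mem_filter, mem_range]
  omega

theorem card_range_filter_lt (n t : ℕ) : #{c ∈ range n | c < t} = min n t := by
  simpa using card_range_filter_add_lt n 0 t

theorem pyrH_succ_mul_pyrH_succ (s m a b : ℕ) :
    pyrH s (m + 1) a * pyrH s (m + 1) b
      = pyrH s m a * pyrH s m b + (2 * m + 1) + (if a < s then 1 else 0)
        + (if b < s then 1 else 0) := by
  unfold pyrH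
  split_ifs <;> ring

theorem pyrD_succ (u s m k : ℕ) :
    pyrD u s (m + 1) k
      = pyrD u s m k + (2 * m + 1) * (u - k) + min (u - k) s + min (u - k) (s - k) := by
  simp only [pyrD, pyrH_succ_mul_pyrH_succ, sum_add_distrib, sum_const, card_range, smul_eq_mul,
    sum_boole, Nat.cast_id, card_range_filter_lt, card_range_filter_add_lt]
  ring

theorem sub_eq_max_zero_add_max_zero_add_min (u s k : ℤ) :
    u - k = max 0 (s - k) + max 0 (u - s - k) + min (min s (u - s)) (min k (u - k)) := by
  omega

theorem min_sub_eq_max_zero_add_min (u s k : ℤ) :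
    min (u - k) s = max 0 (s - k) + min (min s (u - s)) (min k (u - k)) := by
  omega

theorem delta_formula_general (u s : ℕ) (hs2 : s ≤ u - 1)
    (m k : ℕ) (hk2 : k ≤ u - 1) :
    (pyrD u s (m + 1) k : ℤ) - (pyrD u s m k : ℤ)
      = ((u : ℤ) - k) + 2 * ((m : ℤ) + 1) * max 0 ((s : ℤ) - k)
        + 2 * (m : ℤ) * max 0 (((u : ℤ) - s) - k)
        + (2 * (m : ℤ) + 1) * min (min (s : ℤ) ((u : ℤ) - s)) (min (k : ℤ) ((u : ℤ) - k)) := by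
  have hku : k ≤ u := by omega
  have hsk : min (u - k) (s - k) = s - k := min_eq_right (Nat.sub_le_sub_right (by omega) k)
  have hpos : ((s - k : ℕ) : ℤ) = max 0 ((s : ℤ) - k) := by omega
  rw [pyrD_succ, hsk]
  push_cast [Nat.cast_sub hku, hpos]
  linear_combination 2 * (m : ℤ) * sub_eq_max_zero_add_max_zero_add_min (u : ℤ) s k
    + min_sub_eq_max_zero_add_min (u : ℤ) s k

/-- the formula for `δ(m,k) = D(m+1,k) - D(m,k)` from the proof of Theorem 4.8:
`δ(m,k) = (u-k) + 2(m+1)·max{0, s-k} + 2m·max{0, (u-s)-k} + (2m+1)·min{s, u-s, k, u-k}`. -/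
theorem delta_formula (u s : ℕ) (hu : 2 ≤ u) (hs1 : 1 ≤ s) (hs2 : s ≤ u - 1)
    (m k : ℕ) (hk1 : 1 ≤ k) (hk2 : k ≤ u - 1) :
    (pyrD u s (m + 1) k : ℤ) - (pyrD u s m k : ℤ)
      = ((u : ℤ) - k) + 2 * ((m : ℤ) + 1) * max 0 ((s : ℤ) - k)
        + 2 * (m : ℤ) * max 0 (((u : ℤ) - s) - k)
        + (2 * (m : ℤ) + 1) * min (min (s : ℤ) ((u : ℤ) - s)) (min (k : ℤ) ((u : ℤ) - k)) :=
  delta_formula_general u s hs2 m k hk2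
end

section
/- Let u ≥ 1, m ≥ 0 and let a : Fin u → ℤ be nondecreasing with a_j ≥ 1 for all j. Set n = mu + s for any s ≥ max_j a_j (so that b_j := m·j + a_j satisfies 1 ≤ b_j ≤ n), S = Σ_{j=0}^{u−1} a_j, M = Σ_{k=1}^{u} k·a_{u−k}. Then, as rational numbers, Σ_{j=0}^{u−1} Σ_{k=0}^{u−1} ( min(b_j, b_k) − b_j·b_k/n ) = m(2u³ − 3u² + u)/6 + 2M − S − (1/n)·( m²·u²(u−1)²/4 + m·u(u−1)·S + S² ). -/
/-!
For monotone `b`, `min (b j) (b k) = b (min j k)`, and the index `i` is the minimum of exactly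
`2 (u - i) - 1` pairs, so `∑ j, ∑ k, min (b j) (b k) = ∑ j, (2 u - 2 j - 1) b j`; the product part
is `(∑ j, b j)² / n`. Substituting `b j = m j + a j` and the power sums `∑ j` and `∑ j²` gives
the formula, once the reflection `i ↦ u - 1 - i` rewrites `M` as `∑ j, (u - j) a j`.
-/

open Finset

section

variable {R : Type*} [CommRing R]

theorem Fin.sum_sum_min_of_monotone [LinearOrder R] {u : ℕ} (f : Fin u → R) (hf : Monotone f) :
    ∑ j, ∑ k, min (f j) (f k) = ∑ j : Fin u, (2 * (u : R) - 2 * (j : ℕ) - 1) * f j := by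
  induction u with
  | zero => simp
  | succ n ih =>
    have hlast (j : Fin n) : f j.castSucc ≤ f (Fin.last n) := hf (Fin.le_last _)
    have hinit := ih (fun j => f j.castSucc) (hf.comp Fin.strictMono_castSucc.monotone)
    simp only [Fin.sum_univ_castSucc, min_eq_left (hlast _), min_eq_right (hlast _), min_self,
      sum_add_distrib, hinit, Fin.val_castSucc, Fin.val_last, Nat.cast_succ]
    simp only [sub_mul, mul_add, sum_sub_distrib, ← mul_sum]
    ring

theorem Fin.two_mul_sum_val_cast (u : ℕ) : 2 * ∑ j : Fin u, ((j : ℕ) : R) = u * (u - 1) := by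
  induction u with
  | zero => simp
  | succ n ih =>
    rw [Fin.sum_univ_castSucc, mul_add]
    simp only [Fin.val_castSucc, Fin.val_last, ih]
    push_cast
    ring

theorem Fin.six_mul_sum_val_sq_cast (u : ℕ) :
    6 * ∑ j : Fin u, ((j : ℕ) : R) ^ 2 = u * (u - 1) * (2 * u - 1) := by
  induction u with
  | zero => simp
  | succ n ih =>
    rw [Fin.sum_univ_castSucc, mul_add]
    simp only [Fin.val_castSucc, Fin.val_last, ih]
    push_cast
    ring

theorem Fin.sum_succ_mul_rev {u : ℕ} (g : Fin u → R) :
    ∑ i : Fin u, (((i : ℕ) : R) + 1) * g i.rev = ∑ j : Fin u, ((u : R) - (j : ℕ)) * g j := by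
  rw [← Equiv.sum_comp Fin.revPerm]
  refine sum_congr rfl fun i _ => ?_
  have hi : u - ((i : ℕ) + 1) + 1 = u - i := by omega
  rw [Fin.revPerm_apply, Fin.rev_rev, Fin.val_rev, ← Nat.cast_add_one, hi, Nat.cast_sub i.isLt.le]

end

theorem Finset.sum_sum_sub_mul_div {ι K : Type*} [DivisionRing K] (t : Finset ι)
    (g : ι → ι → K) (b : ι → K) (N : K) :
    ∑ j ∈ t, ∑ k ∈ t, (g j k - b j * b k / N) = ∑ j ∈ t, ∑ k ∈ t, g j k - (∑ j ∈ t, b j) ^ 2 / N := by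
  simp only [sq, sum_mul_sum, sum_sub_distrib, sum_div]

/-- closed formula for `|η|²` from the proof of Proposition 4.25.
Here `b j = m·j + a j`, `n = m·u + s`, `S = Σ_j a_j` and `M = Σ_{k=1}^u k·a_{u-k}`
(the index `i : Fin u` in `M` corresponds to `k = i + 1`). -/
theorem eta_norm_squared (u m : ℕ) (a : Fin u → ℤ)
    (hmono : Monotone a)
    (s : ℕ) :
    ∑ j : Fin u, ∑ k : Fin u,
        (((min ((m : ℤ) * (j : ℕ) + a j) ((m : ℤ) * (k : ℕ) + a k) : ℤ) : ℚ)
          - (((m : ℤ) * (j : ℕ) + a j : ℤ) : ℚ) * (((m : ℤ) * (k : ℕ) + a k : ℤ) : ℚ)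
              / ((m * u + s : ℕ) : ℚ))
      = (m : ℚ) * (2 * (u : ℚ) ^ 3 - 3 * (u : ℚ) ^ 2 + u) / 6
        + 2 * (∑ i : Fin u, (((i : ℕ) + 1 : ℕ) : ℚ) * ((a ⟨u - ((i : ℕ) + 1), by omega⟩ : ℤ) : ℚ))
        - ((∑ j : Fin u, a j : ℤ) : ℚ)
        - (1 / ((m * u + s : ℕ) : ℚ)) *
            ((m : ℚ) ^ 2 * (u : ℚ) ^ 2 * ((u : ℚ) - 1) ^ 2 / 4
              + (m : ℚ) * u * ((u : ℚ) - 1) * ((∑ j : Fin u, a j : ℤ) : ℚ)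
              + (((∑ j : Fin u, a j : ℤ) : ℚ)) ^ 2) := by
  have hb : Monotone fun j : Fin u => (m : ℚ) * (j : ℕ) + a j := fun j k hjk =>
    add_le_add (by gcongr; exact hjk) (by exact_mod_cast hmono hjk)
  have hM : ∑ i : Fin u, (((i : ℕ) : ℚ) + 1) * (a ⟨u - ((i : ℕ) + 1), by omega⟩ : ℚ)
      = ∑ j : Fin u, ((u : ℚ) - (j : ℕ)) * a j :=
    Fin.sum_succ_mul_rev fun j => (a j : ℚ)
  have hX : ∑ j : Fin u, ((j : ℕ) : ℚ) = u * (u - 1) / 2 := by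
    linarith [Fin.two_mul_sum_val_cast (R := ℚ) u]
  have hY : ∑ j : Fin u, ((j : ℕ) : ℚ) ^ 2 = u * (u - 1) * (2 * u - 1) / 6 := by
    linarith [Fin.six_mul_sum_val_sq_cast (R := ℚ) u]
  have hlin : ∑ j : Fin u, (2 * (u : ℚ) - 2 * (j : ℕ) - 1) * ((m : ℚ) * (j : ℕ) + a j)
      = m * ((2 * u - 1) * ∑ j : Fin u, ((j : ℕ) : ℚ) - 2 * ∑ j : Fin u, ((j : ℕ) : ℚ) ^ 2)
        + (2 * ∑ j : Fin u, ((u : ℚ) - (j : ℕ)) * a j - ∑ j, (a j : ℚ)) := by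
    simp only [mul_sum, ← sum_sub_distrib, ← sum_add_distrib]
    exact sum_congr rfl fun j _ => by ring
  have hsum : ∑ j : Fin u, ((m : ℚ) * (j : ℕ) + a j)
      = m * ∑ j : Fin u, ((j : ℕ) : ℚ) + ∑ j, (a j : ℚ) := by
    rw [sum_add_distrib, mul_sum]
  push_cast
  rw [sum_sum_sub_mul_div, Fin.sum_sum_min_of_monotone _ hb, hlin, hsum, hX, hY, hM]
  ring
end

section
/- Fix integers u ≥ 2, 1 ≤ s ≤ u−1 and m ∈ ℕ, and set n = mu + s. Let h_c = m+1 for 0 ≤ c < s and h_c = m for s ≤ c ≤ u−1, let β_c = Σ_{c'=0}^{c} h_{c'} (so β_{u−1} = n), let F(i,j) = min(i,j) − ij/n ∈ ℚ for 0 ≤ i,j ≤ n, let d₀ = s·m(m+1) + (u−s)·m(m−1) + n − 1, and let Q = Σ_{i=1}^{n−1} Σ_{j=1}^{n−1} F(i,j) − (2n/u)·Σ_{i=1}^{n−1} Σ_{c=0}^{u−1} F(i, β_c) + (n/u)²·Σ_{c=0}^{u−1} Σ_{c'=0}^{u−1} F(β_c, β_{c'}). Then d₀ − (12u/n)·Q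 = −(s−1)(u−s−1)(u + us − s²)/u. In particular this quantity is independent of m. -/
/-- Bottom-row box labels: `β_c = Σ_{c'=0}^{c} h_{c'}`. -/
def pyrB (s m : ℕ) (c : ℕ) : ℕ := ∑ c' ∈ Finset.range (c + 1), pyrH s m c'

/-!
For `b ≤ n` the row sums of the Gram matrix are `Σ_{0<i<n} F(i,b) = b(n-b)/2`, so the three parts
of `Q` become `(n³-n)/12`, `(n Σβ - Σβ²)/2` and, since `β` is monotone and hence
`min(β_c, β_c') = β_{min(c,c')}`, `(2u-1) Σβ - 2 Σ cβ_c - (Σβ)²/n`. On each of the ranges `c < s`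
and `s ≤ c` the label `β_c` is linear in `c`, so these moments are explicit polynomials in
`m, u, s`, and the claim becomes an identity of rational functions.
-/

open Finset

section PowerSums

variable {K : Type*} [Field K] [CharZero K]

theorem sum_range_quadratic (a b e : K) (k : ℕ) :
    ∑ c ∈ range k, (a + b * c + e * c ^ 2) =
      a * k + b * (k * (k - 1) / 2) + e * (k * (k - 1) * (2 * k - 1) / 6) := by
  induction k with
  | zero => simp
  | succ k ih => rw [sum_range_succ, ih]; push_cast; ring

theorem sum_range_natCast (k : ℕ) : ∑ c ∈ range k, (c : K) = k * (k - 1) / 2 := by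
  simpa using sum_range_quadratic (0 : K) 1 0 k

end PowerSums

theorem sum_sum_range_min {R : Type*} [CommRing R] (g : ℕ → R) (u : ℕ) :
    ∑ c ∈ range u, ∑ c' ∈ range u, g (min c c') =
      ∑ k ∈ range u, (2 * ((u : R) - k) - 1) * g k := by
  induction u with
  | zero => simp
  | succ u ih =>
    have hlt : ∀ c ∈ range u, c ≤ u := fun c hc => (mem_range.1 hc).le
    have hrow : ∑ c ∈ range u, g (min c u) = ∑ c ∈ range u, g c :=
      sum_congr rfl fun c hc => by rw [min_eq_left (hlt c hc)]
    have hcol : ∑ c ∈ range u, g (min u c) = ∑ c ∈ range u, g c :=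
      sum_congr rfl fun c hc => by rw [min_eq_right (hlt c hc)]
    have hweight : ∀ k ∈ range u, (2 * ((↑(u + 1) : R) - k) - 1) * g k =
        (2 * ((u : R) - k) - 1) * g k + 2 * g k := fun k _ => by push_cast; ring
    simp only [sum_range_succ, sum_add_distrib, ih, hrow, hcol, min_self, sum_congr rfl hweight,
      ← mul_sum]
    push_cast
    ring

def weightGram (n i j : ℕ) : ℚ := min (i : ℚ) j - i * j / n

theorem weightGram_comm (n i j : ℕ) : weightGram n i j = weightGram n j i := by
  rw [weightGram, weightGram, min_comm, mul_comm]

theorem sum_Ico_one_eq_sum_range {M : Type*} [AddCommMonoid M] {f : ℕ → M} (hf : f 0 = 0)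
    (n : ℕ) : ∑ i ∈ Ico 1 n, f i = ∑ i ∈ range n, f i := by
  rcases Nat.eq_zero_or_pos n with rfl | hn
  · simp
  · rw [range_eq_Ico, sum_eq_sum_Ico_succ_bot hn, hf, zero_add]

theorem sum_range_min_natCast {n b : ℕ} (hb : b ≤ n) :
    ∑ i ∈ range n, min (i : ℚ) b = b * (b - 1) / 2 + (n - b) * b := by
  rw [← sum_range_add_sum_Ico _ hb, ← sum_range_natCast]
  congr 1
  · exact sum_congr rfl fun i hi => min_eq_left (by exact_mod_cast (mem_range.1 hi).le)
  · rw [sum_congr rfl fun i hi => min_eq_right (by exact_mod_cast (mem_Ico.1 hi).1),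
      sum_const, Nat.card_Ico, nsmul_eq_mul, Nat.cast_sub hb]

theorem sum_weightGram_left {n b : ℕ} (hb : b ≤ n) :
    ∑ i ∈ Ico 1 n, weightGram n i b = b * (n - b) / 2 := by
  rcases Nat.eq_zero_or_pos n with rfl | hn
  · simp [Nat.le_zero.1 hb]
  have hn' : (n : ℚ) ≠ 0 := by positivity
  rw [sum_Ico_one_eq_sum_range (by simp [weightGram])]
  simp only [weightGram, sum_sub_distrib, ← sum_div, ← sum_mul, sum_range_min_natCast hb,
    sum_range_natCast]
  field_simp
  ring

theorem sum_sum_weightGram (n : ℕ) :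
    ∑ i ∈ Ico 1 n, ∑ j ∈ Ico 1 n, weightGram n i j = (n ^ 3 - n) / 12 := by
  have hrow : ∀ i ∈ Ico 1 n, ∑ j ∈ Ico 1 n, weightGram n i j = 0 + n / 2 * i + (-1 / 2) * i ^ 2 :=
    fun i hi => by
      simp only [weightGram_comm n i, sum_weightGram_left (mem_Ico.1 hi).2.le]
      ring
  rw [sum_congr rfl hrow, sum_Ico_one_eq_sum_range (by simp), sum_range_quadratic]
  ring

theorem sum_sum_weightGram_right {β : ℕ → ℕ} {n u : ℕ} (hβ : ∀ c < u, β c ≤ n) :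
    ∑ i ∈ Ico 1 n, ∑ c ∈ range u, weightGram n i (β c) =
      (n * ∑ c ∈ range u, (β c : ℚ) - ∑ c ∈ range u, (β c : ℚ) ^ 2) / 2 := by
  rw [sum_comm, sum_congr rfl fun c hc => sum_weightGram_left (hβ c (mem_range.1 hc)), mul_sum,
    ← sum_sub_distrib, sum_div]
  exact sum_congr rfl fun c _ => by ring

theorem sum_sum_weightGram_of_monotone {β : ℕ → ℕ} (hβ : Monotone β) (n u : ℕ) :
    ∑ c ∈ range u, ∑ c' ∈ range u, weightGram n (β c) (β c') =
      (2 * u - 1) * ∑ c ∈ range u, (β c : ℚ) - 2 * ∑ c ∈ range u, c * (β c : ℚ)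
        - (∑ c ∈ range u, (β c : ℚ)) ^ 2 / n := by
  have hmin : ∀ c c', min (β c : ℚ) (β c') = β (min c c') := fun c c' => by
    rw [← Nat.cast_min, hβ.map_min]
  have hprod : ∑ c ∈ range u, ∑ c' ∈ range u, (β c : ℚ) * β c' / n =
      (∑ c ∈ range u, (β c : ℚ)) ^ 2 / n := by
    simp only [sq, sum_mul_sum, sum_div]
  have hweight : ∀ k ∈ range u, (2 * ((u : ℚ) - k) - 1) * β k = (2 * u - 1) * β k - 2 * (k * β k) :=
    fun k _ => by ring
  simp only [weightGram, hmin, sum_sub_distrib, hprod]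
  rw [sum_sum_range_min (fun k => (β k : ℚ)), sum_congr rfl hweight, sum_sub_distrib, ← mul_sum,
    ← mul_sum]

section Pyramid

variable {s m u : ℕ}

theorem pyrB_eq (s m c : ℕ) : pyrB s m c = (c + 1) * m + min (c + 1) s := by
  induction c with
  | zero => rw [pyrB, sum_range_one, pyrH]; split_ifs <;> omega
  | succ c ih =>
    rw [pyrB, sum_range_succ, ← pyrB, ih, pyrH]
    split_ifs <;> grind

theorem pyrB_of_lt {c : ℕ} (hc : c < s) : pyrB s m c = (c + 1) * (m + 1) := by
  rw [pyrB_eq, min_eq_left hc]; ring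

theorem pyrB_of_le {c : ℕ} (hc : s ≤ c) : pyrB s m c = (c + 1) * m + s := by
  rw [pyrB_eq, min_eq_right (by omega)]

theorem pyrB_monotone (s m : ℕ) : Monotone (pyrB s m) := fun _ _ h =>
  sum_le_sum_of_subset (range_subset_range.2 (by omega))

theorem pyrB_le {c : ℕ} (hc : c < u) : pyrB s m c ≤ m * u + s := by
  rw [pyrB_eq]
  have : (c + 1) * m ≤ u * m := Nat.mul_le_mul_right m hc
  have : min (c + 1) s ≤ s := min_le_right _ _
  linarith

theorem sum_range_pyrB {g : ℕ → ℕ → ℚ} (a₁ b₁ e₁ a₂ b₂ e₂ : ℚ) (hsu : s ≤ u)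
    (h₁ : ∀ c : ℕ, g c ((c + 1) * (m + 1)) = a₁ + b₁ * c + e₁ * c ^ 2)
    (h₂ : ∀ c : ℕ, g c ((c + 1) * m + s) = a₂ + b₂ * c + e₂ * c ^ 2) :
    ∑ c ∈ range u, g c (pyrB s m c) =
      ∑ c ∈ range s, (a₁ + b₁ * c + e₁ * c ^ 2) + ∑ c ∈ range u, (a₂ + b₂ * c + e₂ * c ^ 2)
        - ∑ c ∈ range s, (a₂ + b₂ * c + e₂ * c ^ 2) := by
  rw [← sum_range_add_sum_Ico _ hsu, add_sub_assoc, ← sum_Ico_eq_sub _ hsu]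
  congr 1 <;> refine sum_congr rfl fun c hc => ?_
  · rw [pyrB_of_lt (mem_range.1 hc), h₁]
  · rw [pyrB_of_le (mem_Ico.1 hc).1, h₂]

theorem sum_pyrB (hsu : s ≤ u) :
    ∑ c ∈ range u, (pyrB s m c : ℚ) = m * u * (u + 1) / 2 + s * (s + 1) / 2 + s * (u - s) := by
  rw [sum_range_pyrB (g := fun _ b => (b : ℚ)) (m + 1) (m + 1) 0 (m + s) m 0 hsu
    (fun c => by push_cast; ring) (fun c => by push_cast; ring)]
  simp only [sum_range_quadratic]
  ring

theorem sum_mul_pyrB (hsu : s ≤ u) :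
    ∑ c ∈ range u, c * (pyrB s m c : ℚ) =
      m * (u - 1) * u * (u + 1) / 3 + (s - 1) * s * (s + 1) / 3
        + s * (u * (u - 1) - s * (s - 1)) / 2 := by
  rw [sum_range_pyrB (g := fun c b => c * (b : ℚ)) 0 (m + 1) (m + 1) 0 (m + s) m hsu
    (fun c => by push_cast; ring) (fun c => by push_cast; ring)]
  simp only [sum_range_quadratic]
  ring

theorem sum_pyrB_sq (hsu : s ≤ u) :
    ∑ c ∈ range u, (pyrB s m c : ℚ) ^ 2 =
      m ^ 2 * u * (u + 1) * (2 * u + 1) / 6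
        + 2 * m * (s * (s + 1) * (2 * s + 1) / 6 + s * (u * (u + 1) - s * (s + 1)) / 2)
        + s * (s + 1) * (2 * s + 1) / 6 + s ^ 2 * (u - s) := by
  rw [sum_range_pyrB (g := fun _ b => (b : ℚ) ^ 2) ((m + 1) ^ 2) (2 * (m + 1) ^ 2) ((m + 1) ^ 2)
    ((m + s) ^ 2) (2 * m * (m + s)) (m ^ 2) hsu
    (fun c => by push_cast; ring) (fun c => by push_cast; ring)]
  simp only [sum_range_quadratic]
  ring

end Pyramid

theorem central_charge_formula_general (u s m : ℕ) (hs1 : 1 ≤ s) (hs2 : s ≤ u - 1) :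
    ((s : ℚ) * (m : ℚ) * ((m : ℚ) + 1) + ((u : ℚ) - (s : ℚ)) * (m : ℚ) * ((m : ℚ) - 1)
        + ((m * u + s : ℕ) : ℚ) - 1)
      - (12 * (u : ℚ) / ((m * u + s : ℕ) : ℚ)) *
        ((∑ i ∈ Finset.Ico 1 (m * u + s), ∑ j ∈ Finset.Ico 1 (m * u + s),
            (min (i : ℚ) (j : ℚ) - (i : ℚ) * (j : ℚ) / ((m * u + s : ℕ) : ℚ)))
          - (2 * ((m * u + s : ℕ) : ℚ) / (u : ℚ)) *
            (∑ i ∈ Finset.Ico 1 (m * u + s), ∑ c ∈ Finset.range u,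
              (min (i : ℚ) ((pyrB s m c : ℕ) : ℚ)
                - (i : ℚ) * ((pyrB s m c : ℕ) : ℚ) / ((m * u + s : ℕ) : ℚ)))
          + (((m * u + s : ℕ) : ℚ) / (u : ℚ)) ^ 2 *
            (∑ c ∈ Finset.range u, ∑ c' ∈ Finset.range u,
              (min ((pyrB s m c : ℕ) : ℚ) ((pyrB s m c' : ℕ) : ℚ)
                - ((pyrB s m c : ℕ) : ℚ) * ((pyrB s m c' : ℕ) : ℚ) / ((m * u + s : ℕ) : ℚ))))
      = -(((s : ℚ) - 1) * ((u : ℚ) - (s : ℚ) - 1)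
          * ((u : ℚ) + (u : ℚ) * (s : ℚ) - (s : ℚ) ^ 2)) / (u : ℚ) := by
  have hsu : s ≤ u := by omega
  have hu : (u : ℚ) ≠ 0 := by norm_cast; omega
  have hn : (m : ℚ) * u + s ≠ 0 := by positivity
  have hF : ∀ i j : ℕ, min (i : ℚ) j - i * j / ((m * u + s : ℕ) : ℚ) = weightGram (m * u + s) i j :=
    fun _ _ => rfl
  simp only [hF]
  rw [sum_sum_weightGram, sum_sum_weightGram_right fun c hc => pyrB_le hc,
    sum_sum_weightGram_of_monotone (pyrB_monotone s m), sum_pyrB hsu, sum_mul_pyrB hsu,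
    sum_pyrB_sq hsu]
  push_cast
  field_simp
  ring

/-- Proposition 4.27: with `n = mu + s`, `F(i,j) = min(i,j) - ij/n` the Gram
matrix of fundamental weights of `sl_n`, `d₀ = s·m(m+1) + (u-s)·m(m-1) + n - 1 = dim g₀` and
`Q = Σ_{i,j=1}^{n-1} F(i,j) - (2n/u)·Σ_{i=1}^{n-1} Σ_{c<u} F(i,β_c)
  + (n/u)²·Σ_{c,c'<u} F(β_c,β_{c'}) = |ρ - (n/u)x₀|²`, the central charge
`d₀ - (12u/n)·Q` equals `-(s-1)(u-s-1)(u+us-s²)/u`; in particular it is independent of `m`. -/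
theorem central_charge_formula (u s m : ℕ) (hu : 2 ≤ u) (hs1 : 1 ≤ s) (hs2 : s ≤ u - 1) :
    ((s : ℚ) * (m : ℚ) * ((m : ℚ) + 1) + ((u : ℚ) - (s : ℚ)) * (m : ℚ) * ((m : ℚ) - 1)
        + ((m * u + s : ℕ) : ℚ) - 1)
      - (12 * (u : ℚ) / ((m * u + s : ℕ) : ℚ)) *
        ((∑ i ∈ Finset.Ico 1 (m * u + s), ∑ j ∈ Finset.Ico 1 (m * u + s),
            (min (i : ℚ) (j : ℚ) - (i : ℚ) * (j : ℚ) / ((m * u + s : ℕ) : ℚ)))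
          - (2 * ((m * u + s : ℕ) : ℚ) / (u : ℚ)) *
            (∑ i ∈ Finset.Ico 1 (m * u + s), ∑ c ∈ Finset.range u,
              (min (i : ℚ) ((pyrB s m c : ℕ) : ℚ)
                - (i : ℚ) * ((pyrB s m c : ℕ) : ℚ) / ((m * u + s : ℕ) : ℚ)))
          + (((m * u + s : ℕ) : ℚ) / (u : ℚ)) ^ 2 *
            (∑ c ∈ Finset.range u, ∑ c' ∈ Finset.range u,
              (min ((pyrB s m c : ℕ) : ℚ) ((pyrB s m c' : ℕ) : ℚ)
                - ((pyrB s m c : ℕ) : ℚ) * ((pyrB s m c' : ℕ) : ℚ) / ((m * u + s : ℕ) : ℚ))))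
      = -(((s : ℚ) - 1) * ((u : ℚ) - (s : ℚ) - 1)
          * ((u : ℚ) + (u : ℚ) * (s : ℚ) - (s : ℚ) ^ 2)) / (u : ℚ) :=
  central_charge_formula_general u s m hs1 hs2
end

section
/- Fix integers u ≥ 2, 1 ≤ s ≤ u−1, m ≥ 1, and n = mu + s. Let P = {(c,k) : 0 ≤ c < u, 0 ≤ k < h_c} where h_c = m+1 if c < s and h_c = m otherwise, and let g₀ be the complex Lie algebra of trace-zero P × P matrices A with A_{pq} = 0 unless p and q have the same first coordinate (block-diagonal trace-zero matrices, a Lie subalgebra of sl_n(ℂ)). Let x, y ∈ g₀ be diagonal matrices whose entries depend only on the second coordinate: x_{(c,k)} = ξ_k and y_{(c,k)} = η_k for some ξ, η with Σ_{(c,k) ∈ P} ξ_k = Σ_{(c,k) ∈ P} η_k = 0. Then the Killing form of g₀ satisfies κ_{g₀}(x, y) = (2n/u)·Σ_{p ∈ P} x_p y_p, where κ_{g₀}(x,y) is the trace on g₀ of (ad x)∘(ad y). -/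
attribute [local instance 100] LieRing.ofAssociativeRing

/-- The boxes of the left-adjusted pyramid of the partition `[u^m, s]`: pairs `(c, k)` with
column `c < u` and row `k < h_c`, where `h_c = m+1` if `c < s` and `h_c = m` otherwise. -/
abbrev PyrIdx (u s m : ℕ) :=
  {p : Fin u × Fin (m + 1) // (p.2 : ℕ) < if (p.1 : ℕ) < s then m + 1 else m}

/-- The degree-zero subalgebra `g₀` of `sl_n(ℂ)` (`n = mu + s`) for the good grading attached
to the left-adjusted pyramid of `[u^m, s]`: trace-zero matrices indexed by the boxes of the
pyramid which vanish off the column-diagonal blocks. -/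
def g0 (u s m : ℕ) : LieSubalgebra ℂ (Matrix (PyrIdx u s m) (PyrIdx u s m) ℂ) where
  carrier := {A | Matrix.trace A = 0 ∧ ∀ p q : PyrIdx u s m, p.1.1 ≠ q.1.1 → A p q = 0}
  add_mem' := fun {A B} ha hb =>
    ⟨by simp [Matrix.trace_add, ha.1, hb.1],
      fun p q h => by simp [Matrix.add_apply, ha.2 p q h, hb.2 p q h]⟩
  zero_mem' := ⟨by simp, fun p q h => by simp⟩
  smul_mem' := fun c {A} ha =>
    ⟨by simp [Matrix.trace_smul, ha.1], fun p q h => by simp [Matrix.smul_apply, ha.2 p q h]⟩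
  lie_mem' := fun {A B} ha hb => by
    refine ⟨?_, fun p q h => ?_⟩
    · rw [Ring.lie_def, Matrix.trace_sub, Matrix.trace_mul_comm, sub_self]
    · rw [Ring.lie_def]
      simp only [Matrix.sub_apply, Matrix.mul_apply]
      have h1 : (∑ r : PyrIdx u s m, A p r * B r q) = 0 :=
        Finset.sum_eq_zero fun r _ => by
          by_cases hpr : p.1.1 = r.1.1
          · rw [hb.2 r q fun hrq => h (hpr.trans hrq), mul_zero]
          · rw [ha.2 p r hpr, zero_mul]
      have h2 : (∑ r : PyrIdx u s m, B p r * A r q) = 0 :=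
        Finset.sum_eq_zero fun r _ => by
          by_cases hpr : p.1.1 = r.1.1
          · rw [ha.2 r q fun hrq => h (hpr.trans hrq), mul_zero]
          · rw [hb.2 p r hpr, zero_mul]
      rw [h1, h2, sub_zero]

/-! The Killing form of `g₀` can be computed on the space of all matrices: the map
`A ↦ (block-diagonal part of A) - (tr A / N) • 1` is a projection onto `g₀`, and `ad x ∘ ad y`
kills the identity, so `κ(x, y)` is the trace of `ad x ∘ ad y` composed with the block-diagonal
projection. For diagonal `x, y` this operator multiplies the `(p, q)` entry by
`[p, q in one column] (x_p - x_q)(y_p - y_q)`, hence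
`κ(x, y) = Σ_{p, q in one column} (x_p - x_q)(y_p - y_q)`. Summing column by column with
`Σ_{k, l ∈ S} (a_k - a_l)(b_k - b_l) = 2|S| Σ a b - 2 (Σ a)(Σ b)`, and using that the `s` tall
columns and the `u - s` short ones differ only in the top row, the vanishing of `Σ_p x_p`
turns this into `(2n/u) Σ_p x_p y_p`. -/

open Finset in
theorem Finset.sum_sum_sub_mul_sub {ι R : Type*} [CommRing R] (S : Finset ι) (a b : ι → R) :
    ∑ k ∈ S, ∑ l ∈ S, (a k - a l) * (b k - b l)
      = 2 * #S * ∑ k ∈ S, a k * b k - 2 * (∑ k ∈ S, a k) * ∑ k ∈ S, b k := by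
  have expand : ∀ k l,
      (a k - a l) * (b k - b l) = a k * b k + a l * b l - a k * b l - a l * b k :=
    fun k l => by ring
  simp only [expand, sum_add_distrib, sum_sub_distrib, sum_const, nsmul_eq_mul, ← mul_sum,
    ← sum_mul]
  ring

namespace LinearMap

variable {R M : Type*} [CommRing R] [IsDomain R] [IsPrincipalIdealRing R] [AddCommGroup M]
  [Module R M] [Module.Finite R M] [Module.Free R M]

theorem trace_restrict_eq_trace_comp_of_isProj {N : Submodule R M} {P : M →ₗ[R] M}
    (hP : IsProj N P) (f : M →ₗ[R] M) (hf : ∀ x ∈ N, f x ∈ N) :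
    trace R N (f.restrict hf) = trace R M (f ∘ₗ P) := by
  have hfP : ∀ x, (f ∘ₗ P) x ∈ N := fun x => hf _ (hP.map_mem x)
  have hres : f.restrict hf = (f ∘ₗ P).restrict fun x _ => hfP x := by
    ext x
    simp [hP.map_id x x.2]
  rw [hres, trace_restrict_eq_of_forall_mem N _ hfP]

end LinearMap

theorem LieSubalgebra.killingForm_eq_trace_comp_of_isProj {R A : Type*} [CommRing R] [IsDomain R]
    [IsPrincipalIdealRing R] [LieRing A] [LieAlgebra R A] [Module.Finite R A] [Module.Free R A]
    {L : LieSubalgebra R A} {P : A →ₗ[R] A}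
    (hP : LinearMap.IsProj L.toSubmodule P) (x y : L) :
    killingForm R L x y
      = LinearMap.trace R A ((LieAlgebra.ad R A x ∘ₗ LieAlgebra.ad R A y) ∘ₗ P) := by
  rw [killingForm_apply_apply, ← LinearMap.trace_restrict_eq_trace_comp_of_isProj hP _
    fun z hz => L.lie_mem x.2 (L.lie_mem y.2 hz)]
  rfl

namespace Matrix

variable {m n R : Type*} [CommRing R]

def hadamardLinearMap (C : Matrix m n R) : Matrix m n R →ₗ[R] Matrix m n R where
  toFun := (C ⊙ ·)
  map_add' A B := hadamard_add C A B
  map_smul' k A := hadamard_smul C A k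

@[simp]
theorem hadamardLinearMap_apply (C A : Matrix m n R) : hadamardLinearMap C A = C ⊙ A := rfl

theorem hadamardLinearMap_comp (C D : Matrix m n R) :
    hadamardLinearMap C ∘ₗ hadamardLinearMap D = hadamardLinearMap (C ⊙ D) :=
  LinearMap.ext fun A => (hadamard_assoc C D A).symm

theorem hadamard_single [DecidableEq m] [DecidableEq n] (C : Matrix m n R) (i : m) (j : n)
    (a : R) : C ⊙ single i j a = single i j (C i j * a) := by
  ext k l
  by_cases h : i = k ∧ j = l
  · obtain ⟨rfl, rfl⟩ := h
    simp
  · simp [single_apply_of_ne (h := h)]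

theorem trace_hadamardLinearMap [Fintype m] [Fintype n] [DecidableEq m] [DecidableEq n]
    (C : Matrix m n R) : LinearMap.trace R _ (hadamardLinearMap C) = ∑ i, ∑ j, C i j := by
  have eigen : ∀ ij, hadamardLinearMap C (stdBasis R m n ij)
      = C ij.1 ij.2 • stdBasis R m n ij := by
    rintro ⟨i, j⟩
    simp [stdBasis_eq_single, hadamard_single, smul_single]
  rw [LinearMap.trace_eq_matrix_trace R (stdBasis R m n), trace, Fintype.sum_prod_type]
  simp [LinearMap.toMatrix_apply, eigen]

theorem ad_diagonal [Fintype n] [DecidableEq n] (d : n → R) :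
    LieAlgebra.ad R (Matrix n n R) (diagonal d) = hadamardLinearMap (of fun i j => d i - d j) := by
  ext A i j
  simp only [LieAlgebra.ad_apply, Ring.lie_def, sub_apply, diagonal_mul, mul_diagonal,
    hadamardLinearMap_apply, hadamard_apply, of_apply]
  ring

end Matrix

open Matrix

def sameColumn (u s m : ℕ) : Matrix (PyrIdx u s m) (PyrIdx u s m) ℂ :=
  of fun p q => if p.1.1 = q.1.1 then 1 else 0

noncomputable def g0Proj (u s m : ℕ) :
    Matrix (PyrIdx u s m) (PyrIdx u s m) ℂ →ₗ[ℂ] Matrix (PyrIdx u s m) (PyrIdx u s m) ℂ :=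
  hadamardLinearMap (sameColumn u s m)
    - (Fintype.card (PyrIdx u s m) : ℂ)⁻¹ • (traceLinearMap _ ℂ ℂ).smulRight 1

theorem g0Proj_apply (u s m : ℕ) (A : Matrix (PyrIdx u s m) (PyrIdx u s m) ℂ) :
    g0Proj u s m A
      = sameColumn u s m ⊙ A - ((Fintype.card (PyrIdx u s m) : ℂ)⁻¹ * trace A) • 1 := by
  simp [g0Proj, mul_smul]

theorem isProj_g0Proj (u s m : ℕ) : LinearMap.IsProj (g0 u s m).toSubmodule (g0Proj u s m) where
  map_mem A := by
    refine ⟨?_, fun p q hpq => ?_⟩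
    · have trace_sameColumn : trace (sameColumn u s m ⊙ A) = trace A := by
        simp [trace, sameColumn, hadamard_apply]
      rcases eq_or_ne (Fintype.card (PyrIdx u s m) : ℂ) 0 with hN | hN
      · have : IsEmpty (PyrIdx u s m) := Fintype.card_eq_zero_iff.mp (by exact_mod_cast hN)
        simp [trace]
      · rw [g0Proj_apply, trace_sub, trace_smul, trace_one, trace_sameColumn, smul_eq_mul,
          mul_right_comm, inv_mul_cancel₀ hN, one_mul, sub_self]
    · have hne : p ≠ q := fun h => hpq (h ▸ rfl)
      simp [g0Proj_apply, sameColumn, hadamard_apply, hpq, one_apply_ne hne]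
  map_id A hA := by
    ext p q
    by_cases hpq : p.1.1 = q.1.1
    · simp [g0Proj_apply, hA.1, sameColumn, hadamard_apply, hpq]
    · simp [g0Proj_apply, hA.1, hA.2 p q hpq]

theorem killingForm_g0_diagonal (u s m : ℕ) (d e : PyrIdx u s m → ℂ) (x y : g0 u s m)
    (hx : (x : Matrix (PyrIdx u s m) (PyrIdx u s m) ℂ) = diagonal d)
    (hy : (y : Matrix (PyrIdx u s m) (PyrIdx u s m) ℂ) = diagonal e) :
    killingForm ℂ (g0 u s m) x y
      = ∑ p, ∑ q, if p.1.1 = q.1.1 then (d p - d q) * (e p - e q) else 0 := by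
  set D : Matrix (PyrIdx u s m) (PyrIdx u s m) ℂ :=
    (of fun p q => d p - d q) ⊙ of fun p q => e p - e q
  have ad_one :
      hadamardLinearMap D ∘ₗ (traceLinearMap (PyrIdx u s m) ℂ ℂ).smulRight 1 = 0 := by
    ext A p q
    by_cases hpq : p = q
    · simp [D, hpq, hadamard_apply]
    · simp [hadamard_apply, one_apply_ne hpq]
  rw [LieSubalgebra.killingForm_eq_trace_comp_of_isProj (isProj_g0Proj u s m), hx, hy,
    ad_diagonal, ad_diagonal, hadamardLinearMap_comp, g0Proj, LinearMap.comp_sub,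
    LinearMap.comp_smul, ad_one, smul_zero, sub_zero, hadamardLinearMap_comp,
    trace_hadamardLinearMap]
  simp [sameColumn, hadamard_apply]

open Finset

def pyrRows (s m c : ℕ) : Finset (Fin (m + 1)) := if c < s then univ else {Fin.last m}ᶜ

theorem mem_pyrRows {s m c : ℕ} {k : Fin (m + 1)} :
    k ∈ pyrRows s m c ↔ (k : ℕ) < if c < s then m + 1 else m := by
  unfold pyrRows
  split_ifs
  · simp [Fin.is_le]
  · simp [Fin.ext_iff, Fin.val_last, Nat.lt_iff_le_and_ne, Fin.is_le]

theorem sum_pyrIdx {M : Type*} [AddCommMonoid M] (u s m : ℕ) (G : Fin u × Fin (m + 1) → M) :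
    ∑ p : PyrIdx u s m, G p.1 = ∑ c : Fin u, ∑ k ∈ pyrRows s m c, G (c, k) := by
  rw [← sum_subtype (univ.filter fun p : Fin u × Fin (m + 1) => p.2 ∈ pyrRows s m p.1.val)
    (by simp [mem_pyrRows])]
  exact sum_finset_product _ univ (fun c : Fin u => pyrRows s m c) (by simp)

theorem sum_comp_pyrRows {M : Type*} [AddCommMonoid M] {u s : ℕ} (hsu : s ≤ u) (m : ℕ)
    (H : Finset (Fin (m + 1)) → M) :
    ∑ c : Fin u, H (pyrRows s m c) = s • H univ + (u - s) • H {Fin.last m}ᶜ := by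
  have card_lt : #{c : Fin u | (c : ℕ) < s} = s := by
    rw [Fin.card_filter_val_lt, min_eq_right hsu]
  have card_not_lt : #{c : Fin u | ¬(c : ℕ) < s} = u - s := by
    rw [filter_not, card_sdiff_of_subset (filter_subset _ _), card_lt, card_univ, Fintype.card_fin]
  simp only [pyrRows, apply_ite H, sum_ite, sum_const, card_lt, card_not_lt]

theorem sum_pyrIdx_row {M : Type*} [AddCommMonoid M] {u s : ℕ} (hsu : s ≤ u) (m : ℕ)
    (φ : Fin (m + 1) → M) :
    ∑ p : PyrIdx u s m, φ p.1.2
      = s • ∑ k, φ k + (u - s) • ∑ k ∈ {Fin.last m}ᶜ, φ k := by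
  rw [sum_pyrIdx u s m fun p : Fin u × Fin (m + 1) => φ p.2,
    sum_comp_pyrRows hsu m fun T => ∑ k ∈ T, φ k]

theorem sum_sameColumn {M : Type*} [AddCommMonoid M] {u s : ℕ} (hsu : s ≤ u) (m : ℕ)
    (F : Fin (m + 1) → Fin (m + 1) → M) :
    ∑ p : PyrIdx u s m, ∑ q : PyrIdx u s m, (if p.1.1 = q.1.1 then F p.1.2 q.1.2 else 0)
      = s • ∑ k, ∑ l, F k l
        + (u - s) • ∑ k ∈ {Fin.last m}ᶜ, ∑ l ∈ {Fin.last m}ᶜ, F k l := by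
  rw [← sum_comp_pyrRows hsu m fun T => ∑ k ∈ T, ∑ l ∈ T, F k l,
    sum_pyrIdx u s m fun p : Fin u × Fin (m + 1) =>
      ∑ q : PyrIdx u s m, if p.1 = q.1.1 then F p.2 q.1.2 else 0]
  refine sum_congr rfl fun c _ => sum_congr rfl fun k _ => ?_
  rw [sum_pyrIdx u s m fun q : Fin u × Fin (m + 1) => if c = q.1 then F k q.2 else 0]
  simp

theorem killing_form_row_diagonal_general (u s m : ℕ) (hu : 2 ≤ u) (hs2 : s ≤ u - 1)
    (ξ η : Fin (m + 1) → ℂ)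
    (hξ : ∑ p : PyrIdx u s m, ξ p.1.2 = 0)
    (x y : ↥(g0 u s m))
    (hx : (x : Matrix (PyrIdx u s m) (PyrIdx u s m) ℂ) = Matrix.diagonal fun p => ξ p.1.2)
    (hy : (y : Matrix (PyrIdx u s m) (PyrIdx u s m) ℂ) = Matrix.diagonal fun p => η p.1.2) :
    killingForm ℂ ↥(g0 u s m) x y
      = (2 * ((m * u + s : ℕ) : ℂ) / (u : ℂ)) * ∑ p : PyrIdx u s m, ξ p.1.2 * η p.1.2 := by
  have hsu : s ≤ u := by omega
  have hu0 : (u : ℂ) ≠ 0 := by exact_mod_cast (by omega : u ≠ 0)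
  rw [killingForm_g0_diagonal u s m _ _ x y hx hy,
    sum_sameColumn hsu m fun k l => (ξ k - ξ l) * (η k - η l),
    sum_pyrIdx_row hsu m fun k => ξ k * η k, sum_sum_sub_mul_sub, sum_sum_sub_mul_sub]
  rw [sum_pyrIdx_row hsu m ξ] at hξ
  simp only [card_univ, Fintype.card_fin, card_compl, card_singleton,
    Fintype.sum_eq_add_sum_compl (Fin.last m), nsmul_eq_mul, Nat.cast_sub hsu] at hξ ⊢
  set A := ∑ k ∈ {Fin.last m}ᶜ, ξ k
  set B := ∑ k ∈ {Fin.last m}ᶜ, η k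
  push_cast
  field_simp
  -- the two sides now differ by `(u A + s ξ_m) (u B + s η_m)`, and `hξ` says `u A + s ξ_m = 0`
  linear_combination (-(s * η (Fin.last m) + u * B)) * hξ

/-- Lemma 4.23: for diagonal elements `x, y` of `g₀` whose entries depend only on
the row (second coordinate) and sum to zero, the Killing form of `g₀` (the trace on `g₀` of
`ad x ∘ ad y`) satisfies `κ_{g₀}(x, y) = (2n/u)·Σ_{p} x_p y_p`, where `n = mu + s`. -/
theorem killing_form_row_diagonal (u s m : ℕ) (hu : 2 ≤ u) (hs1 : 1 ≤ s) (hs2 : s ≤ u - 1)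
    (hm : 1 ≤ m) (ξ η : Fin (m + 1) → ℂ)
    (hξ : ∑ p : PyrIdx u s m, ξ p.1.2 = 0)
    (hη : ∑ p : PyrIdx u s m, η p.1.2 = 0)
    (x y : ↥(g0 u s m))
    (hx : (x : Matrix (PyrIdx u s m) (PyrIdx u s m) ℂ) = Matrix.diagonal fun p => ξ p.1.2)
    (hy : (y : Matrix (PyrIdx u s m) (PyrIdx u s m) ℂ) = Matrix.diagonal fun p => η p.1.2) :
    killingForm ℂ ↥(g0 u s m) x y
      = (2 * ((m * u + s : ℕ) : ℂ) / (u : ℂ)) * ∑ p : PyrIdx u s m, ξ p.1.2 * η p.1.2 :=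
  killing_form_row_diagonal_general u s m hu hs2 ξ η hξ x y hx hy
end

section
/- Fix integers u ≥ 2, 1 ≤ s ≤ u−1, m ≥ 1. Let P = {(c,k) : 0 ≤ c < u, 0 ≤ k < h_c} with h_c = m+1 if c < s and h_c = m otherwise, and let g₀ be the Lie algebra of trace-zero P × P complex matrices that vanish off the column-diagonal blocks, with Killing form κ_{g₀}. For a diagonal matrix x indexed by P and a row index k (0 ≤ k ≤ m), let π_k x be the diagonal matrix equal to x minus the mean of x over the row R_k = {p ∈ P : second coordinate of p = k} on R_k, and zero outside R_k; set π_s = π_m (short row) and π_u = Σ_{k=0}^{m−1} π_k (long rows). Let β, β' be trace-zero diagonal matrices whose entries depend only on the column (first coordinate). Then 2·κ_{g₀}(π_s β, π_s β') + κ_{g₀}(π_u β, π_s β') + κ_{g₀}(π_s β, π_u β') = 0. -/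
attribute [local instance 100] LieRing.ofAssociativeRing

/-- The mean over the row `R_k = {p : second coordinate = k}` of a diagonal matrix whose entry
at the box `p = (c, k)` is `b c`. -/
noncomputable def meanRow (u s m : ℕ) (b : Fin u → ℂ) (k : ℕ) : ℂ :=
  (∑ p ∈ Finset.univ.filter (fun p : PyrIdx u s m => (p.1.2 : ℕ) = k), b p.1.1) /
    ((Finset.univ.filter (fun p : PyrIdx u s m => (p.1.2 : ℕ) = k)).card : ℂ)

/-- `π_s β`: the component of the column-constant diagonal matrix `β` (entries `b c`) along the
short row (row `m`): on the short row subtract the row mean, zero elsewhere. -/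
noncomputable def piS (u s m : ℕ) (b : Fin u → ℂ) :
    Matrix (PyrIdx u s m) (PyrIdx u s m) ℂ :=
  Matrix.diagonal fun p => if (p.1.2 : ℕ) = m then b p.1.1 - meanRow u s m b m else 0

/-- `π_u β = Σ_{k<m} π_k β`: the component of `β` along the long rows (rows `k < m`): there
subtract the corresponding row mean, zero on the short row. -/
noncomputable def piU (u s m : ℕ) (b : Fin u → ℂ) :
    Matrix (PyrIdx u s m) (PyrIdx u s m) ℂ :=
  Matrix.diagonal fun p =>
    if (p.1.2 : ℕ) < m then b p.1.1 - meanRow u s m b (p.1.2 : ℕ) else 0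

/-!
On a diagonal element `diag d` of `g₀`, `ad` acts on the matrix unit `E_pq` (with `p`, `q` in one
column) by `d_p - d_q`, while the traceless condition only removes the identity, on which `ad`
vanishes; hence `κ(diag d, diag e) = Σ_{p, q in one column} (d_p - d_q)(e_p - e_q)`.
This form kills column-constant vectors, and `π_s β + π_u β = β - ρ` where `ρ` is the vector of
row means of `β`. So the left-hand side is `-κ(ρ, π_s β') - κ(ρ', π_s β)`, and `κ(ρ, π_s β')`
vanishes: `π_s β'` lives on the short row, every column meeting it contains all rows `0, …, m`,
and its entries sum to zero.
-/
theorem LinearMap.trace_eq_trace_comp_of_retraction {R M N : Type*} [CommRing R]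
    [AddCommGroup M] [Module R M] [Module.Free R M] [Module.Finite R M]
    [AddCommGroup N] [Module R N] [Module.Free R N] [Module.Finite R N]
    (i : N →ₗ[R] M) (r : M →ₗ[R] N) (hri : r ∘ₗ i = LinearMap.id) (φ : N →ₗ[R] N) :
    LinearMap.trace R N φ = LinearMap.trace R M (i ∘ₗ φ ∘ₗ r) := by
  rw [LinearMap.trace_comp_comm', LinearMap.comp_assoc, hri, LinearMap.comp_id]

theorem Finset.sum_sub_sum_div_card {α K : Type*} [Field K] [CharZero K] (t : Finset α)
    (f : α → K) : ∑ p ∈ t, (f p - (∑ q ∈ t, f q) / t.card) = 0 := by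
  rw [Finset.sum_sub_distrib, Finset.sum_const, nsmul_eq_mul,
    mul_div_cancel_of_imp' fun h => by simp_all, sub_self]

section DiagKillingForm

variable {R ι γ : Type*} [CommRing R] [Fintype ι] [DecidableEq γ] (col : ι → γ)

def diagKillingForm (d e : ι → R) : R :=
  ∑ p, ∑ q, if col p = col q then (d p - d q) * (e p - e q) else 0

theorem diagKillingForm_comm (d e : ι → R) :
    diagKillingForm col d e = diagKillingForm col e d := by
  simp only [diagKillingForm, mul_comm]

theorem diagKillingForm_add_left (d₁ d₂ e : ι → R) :
    diagKillingForm col (d₁ + d₂) e = diagKillingForm col d₁ e + diagKillingForm col d₂ e := by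
  simp only [diagKillingForm, ← Finset.sum_add_distrib]
  refine Finset.sum_congr rfl fun p _ => Finset.sum_congr rfl fun q _ => ?_
  simp only [Pi.add_apply]
  split_ifs <;> ring

theorem diagKillingForm_sub_left (d₁ d₂ e : ι → R) :
    diagKillingForm col (d₁ - d₂) e = diagKillingForm col d₁ e - diagKillingForm col d₂ e := by
  simp only [diagKillingForm, ← Finset.sum_sub_distrib]
  refine Finset.sum_congr rfl fun p _ => Finset.sum_congr rfl fun q _ => ?_
  simp only [Pi.sub_apply]
  split_ifs <;> ring

theorem diagKillingForm_eq_zero_of_blockConst {d : ι → R}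
    (hd : ∀ p q, col p = col q → d p = d q) (e : ι → R) : diagKillingForm col d e = 0 :=
  Finset.sum_eq_zero fun p _ => Finset.sum_eq_zero fun q _ => by
    split_ifs with h
    · rw [hd p q h, sub_self, zero_mul]
    · rfl

theorem diagKillingForm_eq_two_mul_sum (d e : ι → R) :
    diagKillingForm col d e
      = 2 * ∑ p, (∑ q, if col p = col q then d p - d q else 0) * e p := by
  have hswap : ∑ p, ∑ q, (if col p = col q then (d q - d p) * e q else 0)
      = ∑ p, ∑ q, (if col p = col q then (d p - d q) * e p else 0) := by
    rw [Finset.sum_comm]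
    simp only [eq_comm]
  calc diagKillingForm col d e
      = ∑ p, ∑ q, ((if col p = col q then (d p - d q) * e p else 0)
          + (if col p = col q then (d q - d p) * e q else 0)) := by
        refine Finset.sum_congr rfl fun p _ => Finset.sum_congr rfl fun q _ => ?_
        split_ifs <;> ring
    _ = 2 * ∑ p, (∑ q, if col p = col q then d p - d q else 0) * e p := by
        simp only [Finset.sum_add_distrib, hswap, Finset.sum_mul, ite_mul, zero_mul]
        ring

end DiagKillingForm

namespace Matrix

variable {R m n : Type*} [CommRing R]

@[simps]
def hadamardLin (W : Matrix m n R) : Matrix m n R →ₗ[R] Matrix m n R where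
  toFun A := W ⊙ A
  map_add' B C := hadamard_add W B C
  map_smul' k B := hadamard_smul W B k

theorem trace_hadamardLin [Fintype m] [Fintype n] [DecidableEq m] [DecidableEq n]
    (W : Matrix m n R) :
    LinearMap.trace R _ (hadamardLin W) = ∑ i, ∑ j, W i j := by
  rw [LinearMap.trace_eq_matrix_trace R (stdBasis R m n), Matrix.trace, Fintype.sum_prod_type]
  refine Finset.sum_congr rfl fun i _ => Finset.sum_congr rfl fun j _ => ?_
  simp [LinearMap.toMatrix_apply, stdBasis, Module.Basis.repr_reindex]

theorem lie_diagonal_left [Fintype m] [DecidableEq m] (d : m → R) (A : Matrix m m R) :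
    ⁅diagonal d, A⁆ = (of fun p q => d p - d q) ⊙ A := by
  ext p q
  simp only [Ring.lie_def, sub_apply, diagonal_mul, mul_diagonal, hadamard_apply, of_apply]
  ring

variable {K ι γ : Type*} [Field K] [Fintype ι] [DecidableEq ι] [DecidableEq γ] (col : ι → γ)

def blockMask : Matrix ι ι K := of fun p q => if col p = col q then 1 else 0

def blockTracelessProj : Matrix ι ι K →ₗ[K] Matrix ι ι K :=
  hadamardLin (blockMask col) - (Fintype.card ι : K)⁻¹ • (traceLinearMap ι K K).smulRight 1

theorem blockTracelessProj_apply (A : Matrix ι ι K) :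
    blockTracelessProj col A = blockMask col ⊙ A - ((Fintype.card ι : K)⁻¹ * A.trace) • 1 := by
  simp [blockTracelessProj, mul_smul]

theorem trace_blockTracelessProj [CharZero K] (A : Matrix ι ι K) :
    (blockTracelessProj col A).trace = 0 := by
  have hmask : (blockMask col ⊙ A).trace = A.trace := by simp [Matrix.trace, blockMask]
  rw [blockTracelessProj_apply, trace_sub, trace_smul, trace_one, hmask, smul_eq_mul,
    inv_mul_eq_div, div_mul_cancel_of_imp, sub_self]
  intro h
  have : IsEmpty ι := Fintype.card_eq_zero_iff.mp (by exact_mod_cast h)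
  simp [Matrix.trace]

theorem blockTracelessProj_apply_of_ne (A : Matrix ι ι K) {p q : ι} (h : col p ≠ col q) :
    blockTracelessProj col A p q = 0 := by
  have hpq : p ≠ q := fun hpq => h (congrArg col hpq)
  simp [blockTracelessProj_apply, blockMask, h, one_apply_ne hpq]

theorem blockTracelessProj_eq_self {A : Matrix ι ι K} (htr : A.trace = 0)
    (hblock : ∀ p q, col p ≠ col q → A p q = 0) : blockTracelessProj col A = A := by
  ext p q
  by_cases h : col p = col q
  · simp [blockTracelessProj_apply, blockMask, htr, h]
  · simp [blockTracelessProj_apply, blockMask, htr, h, hblock p q h]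

theorem killingForm_eq_diagKillingForm [CharZero K] (L : LieSubalgebra K (Matrix ι ι K))
    (hL : ∀ A, A ∈ L ↔ A.trace = 0 ∧ ∀ p q, col p ≠ col q → A p q = 0)
    {x y : L} {d e : ι → K} (hx : (x : Matrix ι ι K) = diagonal d)
    (hy : (y : Matrix ι ι K) = diagonal e) :
    killingForm K L x y = diagKillingForm col d e := by
  let i := L.toSubmodule.subtype
  let r := (blockTracelessProj col).codRestrict L.toSubmodule fun A =>
    (hL _).2 ⟨trace_blockTracelessProj col A, fun _ _ => blockTracelessProj_apply_of_ne col A⟩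
  have hri : r ∘ₗ i = LinearMap.id := LinearMap.ext fun A =>
    Subtype.ext (blockTracelessProj_eq_self col ((hL A).1 A.2).1 ((hL A).1 A.2).2)
  have hconj : i ∘ₗ (LieAlgebra.ad K L x ∘ₗ LieAlgebra.ad K L y) ∘ₗ r
      = hadamardLin ((of fun p q => (d p - d q) * (e p - e q)) ⊙ blockMask col) := by
    ext1 A
    change ⁅(x : Matrix ι ι K), ⁅(y : Matrix ι ι K), blockTracelessProj col A⁆⁆ = _
    rw [hx, hy, lie_diagonal_left, lie_diagonal_left, blockTracelessProj_apply]
    ext p q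
    by_cases hpq : p = q
    · simp [hpq]
    · simp [one_apply_ne hpq, mul_assoc]
  rw [killingForm_apply_apply]
  refine (LinearMap.trace_eq_trace_comp_of_retraction i r hri _).trans ?_
  rw [hconj, trace_hadamardLin]
  simp [diagKillingForm, blockMask]

end Matrix

section Pyramid

open Matrix

variable {u s m : ℕ}

theorem sum_ite_col_eq_sum_rows {c : Fin u} (hc : (c : ℕ) < s) (G : Fin (m + 1) → ℂ) :
    ∑ q : PyrIdx u s m, (if c = q.1.1 then G q.1.2 else 0) = ∑ k, G k := by
  rw [← Finset.sum_filter]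
  refine Finset.sum_nbij' (fun q => q.1.2) (fun k => ⟨(c, k), by simp [hc, Fin.is_le]⟩)
    ?_ ?_ ?_ ?_ ?_
  · simp
  · simp
  · rintro ⟨⟨c', k⟩, hq⟩ h
    obtain rfl : c = c' := by simpa using h
    rfl
  · simp
  · simp

theorem sum_diag_piS (b : Fin u → ℂ) : ∑ p, (piS u s m b).diag p = 0 := by
  simp only [piS, diag_diagonal, meanRow]
  rw [← Finset.sum_filter]
  exact Finset.sum_sub_sum_div_card _ _

theorem diag_piS_add_diag_piU (b : Fin u → ℂ) :
    (piS u s m b).diag + (piU u s m b).diag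
      = (fun p => b p.1.1) - fun p => meanRow u s m b p.1.2 := by
  funext p
  have hle := p.1.2.is_le
  by_cases hp : (p.1.2 : ℕ) = m
  · simp [piS, piU, hp]
  · simp [piS, piU, hp, show (p.1.2 : ℕ) < m by omega]

theorem diagKillingForm_rowConst_diag_piS (r : ℕ → ℂ) (b : Fin u → ℂ) :
    diagKillingForm (fun p : PyrIdx u s m => p.1.1) (fun p => r p.1.2) (piS u s m b).diag = 0 := by
  have hrow : ∀ p : PyrIdx u s m,
      (∑ q : PyrIdx u s m, if p.1.1 = q.1.1 then r p.1.2 - r q.1.2 else 0) * (piS u s m b).diag p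
        = (∑ k : Fin (m + 1), (r m - r k)) * (piS u s m b).diag p := by
    intro p
    by_cases hp : (p.1.2 : ℕ) = m
    · have hc : (p.1.1 : ℕ) < s := by
        have := p.2
        split_ifs at this with hc
        · exact hc
        · omega
      have := sum_ite_col_eq_sum_rows (m := m) hc fun k => r p.1.2 - r k
      rw [this, hp]
    · simp [piS, hp]
  rw [diagKillingForm_eq_two_mul_sum, Finset.sum_congr rfl fun p _ => hrow p, ← Finset.mul_sum,
    sum_diag_piS, mul_zero, mul_zero]

end Pyramid

theorem killing_form_projection_relation_general (u s m : ℕ) (b b' : Fin u → ℂ)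
    (psb psb' pub pub' : ↥(g0 u s m))
    (hpsb : (psb : Matrix (PyrIdx u s m) (PyrIdx u s m) ℂ) = piS u s m b)
    (hpsb' : (psb' : Matrix (PyrIdx u s m) (PyrIdx u s m) ℂ) = piS u s m b')
    (hpub : (pub : Matrix (PyrIdx u s m) (PyrIdx u s m) ℂ) = piU u s m b)
    (hpub' : (pub' : Matrix (PyrIdx u s m) (PyrIdx u s m) ℂ) = piU u s m b') :
    2 * killingForm ℂ ↥(g0 u s m) psb psb'
      + killingForm ℂ ↥(g0 u s m) pub psb'
      + killingForm ℂ ↥(g0 u s m) psb pub' = 0 := by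
  let col := fun p : PyrIdx u s m => p.1.1
  have κ {x y : g0 u s m} {d e} : (x : Matrix _ _ ℂ) = Matrix.diagonal d →
      (y : Matrix _ _ ℂ) = Matrix.diagonal e → killingForm ℂ _ x y = diagKillingForm col d e :=
    Matrix.killingForm_eq_diagKillingForm col _ fun _ => Iff.rfl
  have hS (b) : piS u s m b = Matrix.diagonal (piS u s m b).diag :=
    (Matrix.isDiag_diagonal _).diagonal_diag.symm
  have hU (b) : piU u s m b = Matrix.diagonal (piU u s m b).diag :=
    (Matrix.isDiag_diagonal _).diagonal_diag.symm
  have hcol (b : Fin u → ℂ) : ∀ p q, col p = col q → b p.1.1 = b q.1.1 := fun _ _ => congrArg b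
  rw [κ (hpsb.trans (hS b)) (hpsb'.trans (hS b')), κ (hpub.trans (hU b)) (hpsb'.trans (hS b')),
    κ (hpsb.trans (hS b)) (hpub'.trans (hU b'))]
  calc
    _ = diagKillingForm col ((piS u s m b).diag + (piU u s m b).diag) (piS u s m b').diag
          + diagKillingForm col ((piS u s m b').diag + (piU u s m b').diag) (piS u s m b).diag := by
      rw [diagKillingForm_add_left, diagKillingForm_add_left,
        diagKillingForm_comm col (piS u s m b).diag,
        diagKillingForm_comm col (piS u s m b).diag (piU u s m b').diag]
      ring
    _ = 0 := by
      rw [diag_piS_add_diag_piU, diag_piS_add_diag_piU, diagKillingForm_sub_left,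
        diagKillingForm_sub_left, diagKillingForm_eq_zero_of_blockConst col (hcol b),
        diagKillingForm_eq_zero_of_blockConst col (hcol b'), diagKillingForm_rowConst_diag_piS,
        diagKillingForm_rowConst_diag_piS, sub_self, add_zero]

/-- Lemma 4.24 part (2): for trace-zero diagonal matrices `β, β'` whose entries
depend only on the column, `2κ_{g₀}(π_s β, π_s β') + κ_{g₀}(π_u β, π_s β')
+ κ_{g₀}(π_s β, π_u β') = 0`. -/
theorem killing_form_projection_relation (u s m : ℕ) (hu : 2 ≤ u) (hs1 : 1 ≤ s)
    (hs2 : s ≤ u - 1) (hm : 1 ≤ m) (b b' : Fin u → ℂ)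
    (hb : ∑ p : PyrIdx u s m, b p.1.1 = 0)
    (hb' : ∑ p : PyrIdx u s m, b' p.1.1 = 0)
    (psb psb' pub pub' : ↥(g0 u s m))
    (hpsb : (psb : Matrix (PyrIdx u s m) (PyrIdx u s m) ℂ) = piS u s m b)
    (hpsb' : (psb' : Matrix (PyrIdx u s m) (PyrIdx u s m) ℂ) = piS u s m b')
    (hpub : (pub : Matrix (PyrIdx u s m) (PyrIdx u s m) ℂ) = piU u s m b)
    (hpub' : (pub' : Matrix (PyrIdx u s m) (PyrIdx u s m) ℂ) = piU u s m b') :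
    2 * killingForm ℂ ↥(g0 u s m) psb psb'
      + killingForm ℂ ↥(g0 u s m) pub psb'
      + killingForm ℂ ↥(g0 u s m) psb pub' = 0 :=
  killing_form_projection_relation_general u s m b b' psb psb' pub pub' hpsb hpsb' hpub hpub'
end
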